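/- arXiv:2010.08256 — 7 statements merged into one kernel-verified Lean document; each statement's English description precedes it below -/
import Mathlib

section
/- Let P be a k×l 0-1 pattern having a 1 entry in position (k',l'). Then the m×n matrix M whose 1 entries are exactly all entries in the first k'−1 rows, the last k−k' rows, the first l'−1 columns, and the last l−l' columns is saturating for P; consequently sat(P,m,n) ≤ (k−1)n + (l−1)m − (k−1)(l−1) for all m ≥ k, n ≥ l. -/
/-- `M` contains the pattern `P`: there is an order-preserving selection of rows and
columns of `M` whose submatrix can be turned into `P` by changing `1`s to `0`s. -/
def Contains {k l m n : ℕ} (P : Fin k → Fin l → Bool) (M : Fin m → Fin n → Bool) : Prop :=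
  ∃ r : Fin k → Fin m, ∃ c : Fin l → Fin n, StrictMono r ∧ StrictMono c ∧
    ∀ i j, P i j = true → M (r i) (c j) = true

def Avoids {k l m n : ℕ} (P : Fin k → Fin l → Bool) (M : Fin m → Fin n → Bool) : Prop :=
  ¬ Contains P M

/-- The weight of a 0-1 matrix: the number of its `1` entries. -/
def weight {m n : ℕ} (M : Fin m → Fin n → Bool) : ℕ :=
  (Finset.univ.filter (fun p : Fin m × Fin n => M p.1 p.2 = true)).card

/-- The matrix obtained from `M` by changing the entry at `(p,q)` to `1`. -/
def setOne {m n : ℕ} (M : Fin m → Fin n → Bool) (p : Fin m) (q : Fin n) :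
    Fin m → Fin n → Bool :=
  fun i j => if i = p ∧ j = q then true else M i j

/-- `M` is saturating for `P`: it avoids `P` and flipping any `0` entry creates an
occurrence of `P`. -/
def Saturating {k l m n : ℕ} (P : Fin k → Fin l → Bool) (M : Fin m → Fin n → Bool) : Prop :=
  Avoids P M ∧ ∀ p q, M p q = false → Contains P (setOne M p q)

/-- `(r, c)` is an occurrence of `P` in `M`. -/
def IsOcc {k l m n : ℕ} (P : Fin k → Fin l → Bool) (M : Fin m → Fin n → Bool)
    (r : Fin k → Fin m) (c : Fin l → Fin n) : Prop :=
  StrictMono r ∧ StrictMono c ∧ ∀ i j, P i j = true → M (r i) (c j) = true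

/-- `M` is semisaturating for `P`: flipping any `0` entry creates a new occurrence of `P`. -/
def Semisaturating {k l m n : ℕ} (P : Fin k → Fin l → Bool) (M : Fin m → Fin n → Bool) : Prop :=
  ∀ p q, M p q = false → ∃ r c, IsOcc P (setOne M p q) r c ∧ ¬ IsOcc P M r c

/-- `ex(P,m,n)`: the maximum weight of an `m × n` matrix avoiding `P`. -/
noncomputable def exF {k l : ℕ} (P : Fin k → Fin l → Bool) (m n : ℕ) : ℕ :=
  sSup {w | ∃ M : Fin m → Fin n → Bool, Avoids P M ∧ weight M = w}

/-- `sat(P,m,n)`: the minimum weight of an `m × n` matrix saturating for `P`. -/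
noncomputable def satF {k l : ℕ} (P : Fin k → Fin l → Bool) (m n : ℕ) : ℕ :=
  sInf {w | ∃ M : Fin m → Fin n → Bool, Saturating P M ∧ weight M = w}

/-- `ssat(P,m,n)`: the minimum weight of an `m × n` matrix semisaturating for `P`. -/
noncomputable def ssatF {k l : ℕ} (P : Fin k → Fin l → Bool) (m n : ℕ) : ℕ :=
  sInf {w | ∃ M : Fin m → Fin n → Bool, Semisaturating P M ∧ weight M = w}

lemma sm_shift {k m : ℕ} {r : Fin k → Fin m} (hr : StrictMono r) :
    ∀ d : ℕ, ∀ i j : Fin k, (j : ℕ) = (i : ℕ) + d → (r i : ℕ) + d ≤ (r j : ℕ) := by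
  intro d
  induction d with
  | zero => intro i j h; have : i = j := Fin.ext (by omega); simp [this]
  | succ d ih =>
    intro i j h
    have hj' : (i : ℕ) + d < k := by have := j.isLt; omega
    have h1 := ih i ⟨(i : ℕ) + d, hj'⟩ rfl
    have h2 : (⟨(i : ℕ) + d, hj'⟩ : Fin k) < j := by simp [Fin.lt_def]; omega
    have := hr h2
    rw [Fin.lt_def] at this
    omega

lemma sm_le {k m : ℕ} {r : Fin k → Fin m} (hr : StrictMono r) (i : Fin k) :
    (i : ℕ) ≤ (r i : ℕ) := by
  have hk : 0 < k := i.pos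
  have := sm_shift hr (i : ℕ) ⟨0, hk⟩ i (by simp)
  omega

lemma sm_ub {k m : ℕ} {r : Fin k → Fin m} (hr : StrictMono r) (i : Fin k) :
    (r i : ℕ) + (k - 1 - (i : ℕ)) < m := by
  have hk : 0 < k := i.pos
  have h1 := sm_shift hr (k - 1 - (i : ℕ)) i ⟨k - 1, by omega⟩ (by simp; omega)
  have := (r ⟨k - 1, by omega⟩).isLt
  omega

lemma card_filter_band (m a c : ℕ) (hc : c ≤ m) :
    (Finset.univ.filter (fun i : Fin m => a ≤ (i : ℕ) ∧ (i : ℕ) < c)).card = c - a := by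
  have h1 : (Finset.univ.filter (fun i : Fin m => a ≤ (i : ℕ) ∧ (i : ℕ) < c)).card
      = ((Finset.range m).filter (fun x => a ≤ x ∧ x < c)).card := by
    refine Finset.card_bij (fun i _ => (i : ℕ)) ?_ ?_ ?_
    · intro i hi; simp at hi ⊢; omega
    · intro i _ j _ h; exact Fin.ext h
    · intro x hx; simp at hx; exact ⟨⟨x, hx.1⟩, by simp [hx.2.1, hx.2.2], rfl⟩
  rw [h1]
  have h2 : (Finset.range m).filter (fun x => a ≤ x ∧ x < c) = Finset.Ico a c := by
    ext x; simp [Finset.mem_Ico, Finset.mem_range]; omega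
  rw [h2, Nat.card_Ico]

lemma setOne_of {m n : ℕ} (M : Fin m → Fin n → Bool) (p : Fin m) (q : Fin n)
    (x : Fin m) (y : Fin n) (h : M x y = true) : setOne M p q x y = true := by
  unfold setOne; split <;> simp [h]

/-- the matrix filling the first `k'` rows, last `k-1-k'` rows,
first `l'` columns and last `l-1-l'` columns (0-indexed position `(k',l')` of a `1`
entry of `P`) is saturating for `P`; hence
`sat(P,m,n) ≤ (k-1)n + (l-1)m - (k-1)(l-1)` for `m ≥ k`, `n ≥ l`. -/
theorem sat_upper_bound {k l : ℕ} (P : Fin k → Fin l → Bool)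
    (k' : Fin k) (l' : Fin l) (hP : P k' l' = true)
    (m n : ℕ) (hm : k ≤ m) (hn : l ≤ n) :
    Saturating P (fun (i : Fin m) (j : Fin n) =>
      decide ((i : ℕ) < (k' : ℕ) ∨ m - (k - 1 - (k' : ℕ)) ≤ (i : ℕ) ∨
              (j : ℕ) < (l' : ℕ) ∨ n - (l - 1 - (l' : ℕ)) ≤ (j : ℕ))) ∧
    satF P m n ≤ (k - 1) * n + (l - 1) * m - (k - 1) * (l - 1) := by
  have hk : 0 < k := k'.pos
  have hl : 0 < l := l'.pos
  have ha : (k' : ℕ) < k := k'.isLt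
  have hb : (l' : ℕ) < l := l'.isLt
  set W : Fin m → Fin n → Bool := fun (i : Fin m) (j : Fin n) =>
      decide ((i : ℕ) < (k' : ℕ) ∨ m - (k - 1 - (k' : ℕ)) ≤ (i : ℕ) ∨
              (j : ℕ) < (l' : ℕ) ∨ n - (l - 1 - (l' : ℕ)) ≤ (j : ℕ)) with hW
  have hWone : ∀ (x : Fin m) (y : Fin n),
      ((x : ℕ) < (k' : ℕ) ∨ m - (k - 1 - (k' : ℕ)) ≤ (x : ℕ) ∨
       (y : ℕ) < (l' : ℕ) ∨ n - (l - 1 - (l' : ℕ)) ≤ (y : ℕ)) → W x y = true := by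
    intro x y h; simp only [hW, decide_eq_true_eq]; omega
  have hAvoid : Avoids P W := by
    rintro ⟨r, c, hr, hc, h⟩
    have h1 := h k' l' hP
    simp only [hW, decide_eq_true_eq] at h1
    have hra := sm_le hr k'
    have hrb := sm_ub hr k'
    have hca := sm_le hc l'
    have hcb := sm_ub hc l'
    omega
  have hSat : Saturating P W := by
    refine ⟨hAvoid, ?_⟩
    intro p q hpq
    simp only [hW, decide_eq_false_iff_not] at hpq
    push_neg at hpq
    obtain ⟨hp1, hp2, hq1, hq2⟩ := hpq
    refine ⟨fun i => if (i : ℕ) < (k' : ℕ) then ⟨i, by have := i.isLt; omega⟩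
        else if (i : ℕ) = (k' : ℕ) then p else ⟨m - k + i, by have := i.isLt; omega⟩,
      fun j => if (j : ℕ) < (l' : ℕ) then ⟨j, by have := j.isLt; omega⟩
        else if (j : ℕ) = (l' : ℕ) then q else ⟨n - l + j, by have := j.isLt; omega⟩,
      ?_, ?_, ?_⟩
    · intro i j hij
      have hij' : (i : ℕ) < (j : ℕ) := hij
      have hik := i.isLt; have hjk := j.isLt; have hpm := p.isLt
      simp only [Fin.lt_def]
      split_ifs <;> simp <;> omega
    · intro i j hij
      have hij' : (i : ℕ) < (j : ℕ) := hij
      have hik := i.isLt; have hjk := j.isLt; have hqn := q.isLt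
      simp only [Fin.lt_def]
      split_ifs <;> simp <;> omega
    · intro i j hPij
      have hik := i.isLt; have hjk := j.isLt
      beta_reduce
      by_cases hi : (i : ℕ) < (k' : ℕ)
      · rw [if_pos hi]
        exact setOne_of _ _ _ _ _ (hWone _ _ (Or.inl hi))
      · by_cases hi2 : (i : ℕ) = (k' : ℕ)
        · rw [if_neg hi, if_pos hi2]
          by_cases hj : (j : ℕ) < (l' : ℕ)
          · rw [if_pos hj]
            exact setOne_of _ _ _ _ _ (hWone _ _ (Or.inr (Or.inr (Or.inl hj))))
          · by_cases hj2 : (j : ℕ) = (l' : ℕ)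
            · rw [if_neg hj, if_pos hj2]
              simp [setOne]
            · rw [if_neg hj, if_neg hj2]
              exact setOne_of _ _ _ _ _ (hWone _ _ (Or.inr (Or.inr (Or.inr
                (by omega : n - (l - 1 - (l' : ℕ)) ≤ n - l + (j : ℕ))))))
        · rw [if_neg hi, if_neg hi2]
          exact setOne_of _ _ _ _ _ (hWone _ _ (Or.inr (Or.inl
            (by omega : m - (k - 1 - (k' : ℕ)) ≤ m - k + (i : ℕ)))))
  refine ⟨hSat, ?_⟩
  have hwle : weight W ≤ (k - 1) * n + (l - 1) * m - (k - 1) * (l - 1) := by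
    classical
    unfold weight
    set pr : Fin m × Fin n → Prop := fun x =>
      ((k' : ℕ) ≤ (x.1 : ℕ) ∧ (x.1 : ℕ) < m - (k - 1 - (k' : ℕ))) ∧
      ((l' : ℕ) ≤ (x.2 : ℕ) ∧ (x.2 : ℕ) < n - (l - 1 - (l' : ℕ))) with hpr
    have hfe : (Finset.univ.filter (fun x : Fin m × Fin n => W x.1 x.2 = true))
        = Finset.univ.filter (fun x => ¬ pr x) := by
      ext x
      simp only [Finset.mem_filter, hW, hpr, decide_eq_true_eq]
      constructor
      · rintro ⟨hx, h⟩; exact ⟨hx, by omega⟩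
      · rintro ⟨hx, h⟩; exact ⟨hx, by omega⟩
    have hcard : (Finset.univ.filter pr).card = (m - (k - 1)) * (n - (l - 1)) := by
      have heq : Finset.univ.filter pr
          = (Finset.univ.filter (fun i : Fin m => (k' : ℕ) ≤ (i : ℕ) ∧ (i : ℕ) < m - (k - 1 - (k' : ℕ)))) ×ˢ
            (Finset.univ.filter (fun j : Fin n => (l' : ℕ) ≤ (j : ℕ) ∧ (j : ℕ) < n - (l - 1 - (l' : ℕ)))) := by
        ext x
        simp only [Finset.mem_filter, Finset.mem_product, Finset.mem_univ, true_and, hpr]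
      rw [heq, Finset.card_product, card_filter_band _ _ _ (by omega),
        card_filter_band _ _ _ (by omega)]
      congr 1 <;> omega
    have htot := Finset.card_filter_add_card_filter_not (s := (Finset.univ : Finset (Fin m × Fin n))) (p := pr)
    have huniv : (Finset.univ : Finset (Fin m × Fin n)).card = m * n := by
      simp [Finset.card_univ]
    rw [hfe]
    have h1 : (Finset.univ.filter (fun x => ¬ pr x)).card
        = m * n - (m - (k - 1)) * (n - (l - 1)) := by omega
    rw [h1]
    have hab : (k - 1) * (l - 1) ≤ (k - 1) * n := Nat.mul_le_mul_left _ (by omega)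
    have hA : k - 1 ≤ m := by omega
    have hB : l - 1 ≤ n := by omega
    have hab2 : (k - 1) * (l - 1) ≤ (k - 1) * n + (l - 1) * m :=
      le_trans hab (Nat.le_add_right _ _)
    rw [Nat.sub_le_iff_le_add]
    zify [hab2, hA, hB]
    nlinarith [hA, hB]
  exact le_trans (Nat.sInf_le ⟨W, hSat, rfl⟩) hwle
end

section
/- Let P be a 0-1 pattern of block form [[A, 0],[0, B]] where A and B are not-all-zero 0-1 matrices and the off-diagonal blocks are all-zero. Then no n×n matrix saturating for P has an all-zero row or an all-zero column; consequently sat(P,n,n) ≥ n. -/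
/-- `B` occurs in `M` strictly below row `i` and strictly right of column value `t`. -/
def BRocc {kb lb m n : ℕ} (B : Fin kb → Fin lb → Bool) (M : Fin m → Fin n → Bool)
    (i : Fin m) (t : ℕ) : Prop :=
  ∃ (r : Fin kb → Fin m) (c : Fin lb → Fin n), StrictMono r ∧ StrictMono c ∧
    (∀ x, i < r x) ∧ (∀ y, t < (c y : ℕ)) ∧
    ∀ x y, B x y = true → M (r x) (c y) = true

/-- `A` occurs in `M` strictly above row `i` and strictly left of column value `t`. -/
def ALocc {ka la m n : ℕ} (A : Fin ka → Fin la → Bool) (M : Fin m → Fin n → Bool)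
    (i : Fin m) (t : ℕ) : Prop :=
  ∃ (r : Fin ka → Fin m) (c : Fin la → Fin n), StrictMono r ∧ StrictMono c ∧
    (∀ x, r x < i) ∧ (∀ y, (c y : ℕ) < t) ∧
    ∀ x y, A x y = true → M (r x) (c y) = true

lemma addCases_strictMono {k l m : ℕ} {f : Fin k → Fin m} {g : Fin l → Fin m}
    (hf : StrictMono f) (hg : StrictMono g) (hfg : ∀ x y, f x < g y) :
    StrictMono (Fin.addCases f g : Fin (k + l) → Fin m) := by
  intro u v huv
  induction u using Fin.addCases with
  | left x =>
    induction v using Fin.addCases with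
    | left y =>
      simp only [Fin.addCases_left]
      exact hf (by simp only [Fin.lt_def, Fin.coe_castAdd] at huv ⊢; exact huv)
    | right y => simpa using hfg x y
  | right x =>
    induction v using Fin.addCases with
    | left y =>
      exfalso
      simp only [Fin.lt_def, Fin.coe_natAdd, Fin.coe_castAdd] at huv
      omega
    | right y =>
      simp only [Fin.addCases_right]
      exact hg (by simp only [Fin.lt_def, Fin.coe_natAdd] at huv ⊢; omega)

lemma combine_occ {ka la kb lb m n : ℕ} {A : Fin ka → Fin la → Bool} {B : Fin kb → Fin lb → Bool}
    {P : Fin (ka + kb) → Fin (la + lb) → Bool}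
    (hPA : ∀ i j, P (Fin.castAdd kb i) (Fin.castAdd lb j) = A i j)
    (hPB : ∀ i j, P (Fin.natAdd ka i) (Fin.natAdd la j) = B i j)
    (hP0 : ∀ i j, P (Fin.castAdd kb i) (Fin.natAdd la j) = false)
    (hP0' : ∀ i j, P (Fin.natAdd ka i) (Fin.castAdd lb j) = false)
    {M : Fin m → Fin n → Bool}
    {rA : Fin ka → Fin m} {cA : Fin la → Fin n} {rB : Fin kb → Fin m} {cB : Fin lb → Fin n}
    (hrA : StrictMono rA) (hcA : StrictMono cA) (hrB : StrictMono rB) (hcB : StrictMono cB)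
    (hr : ∀ x y, rA x < rB y) (hc : ∀ x y, cA x < cB y)
    (hAocc : ∀ x y, A x y = true → M (rA x) (cA y) = true)
    (hBocc : ∀ x y, B x y = true → M (rB x) (cB y) = true) :
    Contains P M := by
  refine ⟨Fin.addCases rA rB, Fin.addCases cA cB,
    addCases_strictMono hrA hrB hr, addCases_strictMono hcA hcB hc, ?_⟩
  intro z w hzw
  induction z using Fin.addCases with
  | left x =>
    induction w using Fin.addCases with
    | left y => simpa using hAocc x y (by rwa [hPA] at hzw)
    | right y => rw [hP0] at hzw; exact absurd hzw (by simp)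
  | right x =>
    induction w using Fin.addCases with
    | left y => rw [hP0'] at hzw; exact absurd hzw (by simp)
    | right y => simpa using hBocc x y (by rwa [hPB] at hzw)

lemma split_occ {ka la kb lb m n : ℕ} {A : Fin ka → Fin la → Bool} {B : Fin kb → Fin lb → Bool}
    {P : Fin (ka + kb) → Fin (la + lb) → Bool}
    (hPA : ∀ i j, P (Fin.castAdd kb i) (Fin.castAdd lb j) = A i j)
    (hPB : ∀ i j, P (Fin.natAdd ka i) (Fin.natAdd la j) = B i j)
    (hP0 : ∀ i j, P (Fin.castAdd kb i) (Fin.natAdd la j) = false)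
    (hP0' : ∀ i j, P (Fin.natAdd ka i) (Fin.castAdd lb j) = false)
    {M : Fin m → Fin n → Bool} (hav : Avoids P M) {i : Fin m} {q : Fin n}
    (hcont : Contains P (setOne M i q)) :
    BRocc B M i (q : ℕ) ∨ ALocc A M i (q : ℕ) := by
  obtain ⟨r, c, hr, hc, hocc⟩ := hcont
  have hex : ∃ a b, P a b = true ∧ r a = i ∧ c b = q := by
    by_contra hno
    push_neg at hno
    apply hav
    refine ⟨r, c, hr, hc, fun a b hab => ?_⟩
    have h1 := hocc a b hab
    have h2 := hno a b hab
    by_cases h3 : r a = i ∧ c b = q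
    · exact absurd h3.2 (h2 h3.1)
    · rwa [setOne, if_neg h3] at h1
  obtain ⟨a, b, hab, hra, hcb⟩ := hex
  have hcbv : ((c b : Fin n) : ℕ) = (q : ℕ) := congrArg Fin.val hcb
  by_cases hb : (b : ℕ) < la
  · have ha : (a : ℕ) < ka := by
      by_contra ha
      have ha' : a = Fin.natAdd ka ⟨(a : ℕ) - ka, by omega⟩ := by
        apply Fin.ext; simp; omega
      have hb' : b = Fin.castAdd lb ⟨(b : ℕ), hb⟩ := by apply Fin.ext; simp
      rw [ha', hb', hP0'] at hab
      exact absurd hab (by simp)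
    left
    refine ⟨fun x => r (Fin.natAdd ka x), fun y => c (Fin.natAdd la y),
      hr.comp (Fin.strictMono_natAdd ka), hc.comp (Fin.strictMono_natAdd la), ?_, ?_, ?_⟩
    · intro x
      rw [← hra]
      exact hr (by simp [Fin.lt_def]; omega)
    · intro y
      show (q : ℕ) < (c (Fin.natAdd la y) : ℕ)
      have h1 : c b < c (Fin.natAdd la y) := hc (by simp [Fin.lt_def]; omega)
      have h2 := Fin.lt_def.mp h1
      omega
    · intro x y hxy
      show M (r (Fin.natAdd ka x)) (c (Fin.natAdd la y)) = true
      have h1 := hocc _ _ (by rw [hPB]; exact hxy)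
      have hne : ¬ (r (Fin.natAdd ka x) = i ∧ c (Fin.natAdd la y) = q) := by
        intro hcon
        have h2 : r a < r (Fin.natAdd ka x) := hr (by simp [Fin.lt_def]; omega)
        rw [hra, hcon.1] at h2
        exact lt_irrefl _ h2
      rwa [setOne, if_neg hne] at h1
  · have ha : ka ≤ (a : ℕ) := by
      by_contra ha
      push_neg at ha
      have ha' : a = Fin.castAdd kb ⟨(a : ℕ), ha⟩ := by apply Fin.ext; simp
      have hb' : b = Fin.natAdd la ⟨(b : ℕ) - la, by omega⟩ := by
        apply Fin.ext; simp; omega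
      rw [ha', hb', hP0] at hab
      exact absurd hab (by simp)
    right
    refine ⟨fun x => r (Fin.castAdd kb x), fun y => c (Fin.castAdd lb y),
      hr.comp (Fin.strictMono_castAdd kb), hc.comp (Fin.strictMono_castAdd lb), ?_, ?_, ?_⟩
    · intro x
      rw [← hra]
      exact hr (by simp [Fin.lt_def]; omega)
    · intro y
      show (c (Fin.castAdd lb y) : ℕ) < (q : ℕ)
      have h1 : c (Fin.castAdd lb y) < c b := hc (by simp [Fin.lt_def]; omega)
      have h2 := Fin.lt_def.mp h1
      omega
    · intro x y hxy
      show M (r (Fin.castAdd kb x)) (c (Fin.castAdd lb y)) = true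
      have h1 := hocc _ _ (by rw [hPA]; exact hxy)
      have hne : ¬ (r (Fin.castAdd kb x) = i ∧ c (Fin.castAdd lb y) = q) := by
        intro hcon
        have h2 : r (Fin.castAdd kb x) < r a := hr (by simp [Fin.lt_def]; omega)
        rw [hra, hcon.1] at h2
        exact lt_irrefl _ h2
      rwa [setOne, if_neg hne] at h1

lemma no_empty_row {ka la kb lb m n : ℕ} {A : Fin ka → Fin la → Bool} {B : Fin kb → Fin lb → Bool}
    (hA : ∃ i j, A i j = true) (hB : ∃ i j, B i j = true)
    {P : Fin (ka + kb) → Fin (la + lb) → Bool}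
    (hPA : ∀ i j, P (Fin.castAdd kb i) (Fin.castAdd lb j) = A i j)
    (hPB : ∀ i j, P (Fin.natAdd ka i) (Fin.natAdd la j) = B i j)
    (hP0 : ∀ i j, P (Fin.castAdd kb i) (Fin.natAdd la j) = false)
    (hP0' : ∀ i j, P (Fin.natAdd ka i) (Fin.castAdd lb j) = false)
    {M : Fin m → Fin n → Bool} (hn : 0 < n) (hsat : Saturating P M) (i : Fin m) :
    ∃ j, M i j = true := by
  by_contra hrow'
  push_neg at hrow'
  have hrow : ∀ j, M i j = false := fun j => by simpa using hrow' j
  have key : ∀ q : Fin n, BRocc B M i (q : ℕ) ∨ ALocc A M i (q : ℕ) :=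
    fun q => split_occ hPA hPB hP0 hP0' hsat.1 (hsat.2 i q (hrow q))
  have hBR : ∀ t, t < n → BRocc B M i t := by
    intro t
    induction t with
    | zero =>
      intro ht
      rcases key ⟨0, ht⟩ with h | h
      · exact h
      · obtain ⟨r, c, _, _, _, hcy, _⟩ := h
        obtain ⟨_, jA, _⟩ := hA
        have hlt : (c jA : ℕ) < 0 := hcy jA
        omega
    | succ t ih =>
      intro ht
      have hBRt := ih (by omega)
      rcases key ⟨t + 1, ht⟩ with h | h
      · exact h
      · exfalso
        obtain ⟨rA, cA, h1, h2, h3, h4, h5⟩ := h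
        obtain ⟨rB, cB, g1, g2, g3, g4, g5⟩ := hBRt
        refine hsat.1 (combine_occ hPA hPB hP0 hP0' h1 h2 g1 g2
          (fun x y => lt_trans (h3 x) (g3 y)) (fun x y => ?_) h5 g5)
        have hx : (cA x : ℕ) < t + 1 := h4 x
        have hy : t < (cB y : ℕ) := g4 y
        simp only [Fin.lt_def]
        omega
  obtain ⟨_, c0, _, _, _, hcy, _⟩ := hBR (n - 1) (by omega)
  obtain ⟨_, jB, _⟩ := hB
  have h1 := hcy jB
  have h2 := (c0 jB).isLt
  omega

lemma contains_transpose {k l m n : ℕ} {P : Fin k → Fin l → Bool} {M : Fin m → Fin n → Bool}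
    (h : Contains P M) : Contains (fun j i => P i j) (fun j i => M i j) := by
  obtain ⟨r, c, hr, hc, hocc⟩ := h
  exact ⟨c, r, hc, hr, fun j i hij => hocc i j hij⟩

lemma setOne_transpose {m n : ℕ} (M : Fin m → Fin n → Bool) (p : Fin m) (q : Fin n) :
    (fun j i => setOne M p q i j) = setOne (fun j i => M i j) q p := by
  funext j i
  simp [setOne, and_comm]

lemma saturating_transpose {k l m n : ℕ} {P : Fin k → Fin l → Bool} {M : Fin m → Fin n → Bool}
    (h : Saturating P M) : Saturating (fun j i => P i j) (fun j i => M i j) := by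
  refine ⟨fun hc => h.1 (contains_transpose hc), fun q p hpq => ?_⟩
  have h2 := contains_transpose (h.2 p q hpq)
  rwa [setOne_transpose] at h2

lemma weight_ge_of_rows {n : ℕ} {M : Fin n → Fin n → Bool}
    (h : ∀ i, ∃ j, M i j = true) : n ≤ weight M := by
  classical
  have hcard : (Finset.univ : Finset (Fin n)).card ≤
      (Finset.univ.filter (fun p : Fin n × Fin n => M p.1 p.2 = true)).card := by
    apply Finset.card_le_card_of_injOn (fun i => (i, Classical.choose (h i)))
    · intro i _
      simp [Finset.mem_filter, Classical.choose_spec (h i)]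
    · intro a _ b _ hab
      exact congrArg Prod.fst hab
  simpa [weight] using hcard

lemma weight_lt_setOne {m n : ℕ} {M : Fin m → Fin n → Bool} {p : Fin m} {q : Fin n}
    (h : M p q = false) : weight M < weight (setOne M p q) := by
  classical
  apply Finset.card_lt_card
  constructor
  · intro x hx
    simp only [Finset.mem_filter, Finset.mem_univ, true_and] at hx ⊢
    by_cases hx' : x.1 = p ∧ x.2 = q <;> simp [setOne, hx', hx]
  · intro hsub
    have h1 : (p, q) ∈ Finset.univ.filter
        (fun x : Fin m × Fin n => setOne M p q x.1 x.2 = true) := by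
      simp [setOne]
    have h2 := hsub h1
    simp only [Finset.mem_filter, Finset.mem_univ, true_and] at h2
    rw [h] at h2
    exact absurd h2 (by simp)

lemma sat_exists {k l m n : ℕ} (P : Fin k → Fin l → Bool) (hP : ∃ i j, P i j = true) :
    ∃ M : Fin m → Fin n → Bool, Saturating P M := by
  classical
  have hne : (Finset.univ.filter fun M : Fin m → Fin n → Bool => Avoids P M).Nonempty := by
    refine ⟨fun _ _ => false, ?_⟩
    simp only [Finset.mem_filter, Finset.mem_univ, true_and]
    rintro ⟨r, c, _, _, hocc⟩
    obtain ⟨i, j, hij⟩ := hP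
    exact absurd (hocc i j hij) (by simp)
  obtain ⟨M, hM, hmax⟩ := Finset.exists_max_image _ weight hne
  simp only [Finset.mem_filter, Finset.mem_univ, true_and] at hM
  refine ⟨M, hM, fun p q hpq => ?_⟩
  by_contra hcon
  have hav : Avoids P (setOne M p q) := hcon
  have := hmax (setOne M p q) (by simp [Finset.mem_filter, hav])
  exact absurd this (not_le.mpr (weight_lt_setOne hpq))

/-- if `P` has block form `[[A, 0], [0, B]]` with `A, B` not all zero,
then no `n × n` matrix saturating for `P` has an all-zero row or column; hence
`sat(P,n,n) ≥ n`. -/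
theorem sat_linear_of_block_diag {ka la kb lb : ℕ}
    (A : Fin ka → Fin la → Bool) (B : Fin kb → Fin lb → Bool)
    (hA : ∃ i j, A i j = true) (hB : ∃ i j, B i j = true)
    (P : Fin (ka + kb) → Fin (la + lb) → Bool)
    (hPA : ∀ (i : Fin ka) (j : Fin la), P (Fin.castAdd kb i) (Fin.castAdd lb j) = A i j)
    (hPB : ∀ (i : Fin kb) (j : Fin lb), P (Fin.natAdd ka i) (Fin.natAdd la j) = B i j)
    (hP0 : ∀ (i : Fin ka) (j : Fin lb), P (Fin.castAdd kb i) (Fin.natAdd la j) = false)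
    (hP0' : ∀ (i : Fin kb) (j : Fin la), P (Fin.natAdd ka i) (Fin.castAdd lb j) = false) :
    (∀ n : ℕ, ∀ M : Fin n → Fin n → Bool, Saturating P M →
      (∀ i : Fin n, ∃ j : Fin n, M i j = true) ∧
      (∀ j : Fin n, ∃ i : Fin n, M i j = true)) ∧
    (∀ n : ℕ, n ≤ satF P n n) := by
  obtain ⟨iA, jA, hAij⟩ := hA
  obtain ⟨iB, jB, hBij⟩ := hB
  have main : ∀ n : ℕ, ∀ M : Fin n → Fin n → Bool, Saturating P M →
      (∀ i : Fin n, ∃ j : Fin n, M i j = true) ∧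
      (∀ j : Fin n, ∃ i : Fin n, M i j = true) := by
    intro n M hsat
    constructor
    · intro i
      exact no_empty_row ⟨iA, jA, hAij⟩ ⟨iB, jB, hBij⟩ hPA hPB hP0 hP0' i.pos hsat i
    · intro j
      have hsat' : Saturating (fun v u => P u v) (fun v u => M u v) :=
        saturating_transpose hsat
      exact no_empty_row (A := fun v u => A u v) (B := fun v u => B u v)
        ⟨jA, iA, hAij⟩ ⟨jB, iB, hBij⟩
        (fun v u => hPA u v) (fun v u => hPB u v)
        (fun v u => hP0' u v) (fun v u => hP0 u v) j.pos hsat' j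
  refine ⟨main, fun n => ?_⟩
  rcases Nat.eq_zero_or_pos n with hn | hn
  · simp [hn]
  · have hPtrue : ∃ i j, P i j = true :=
      ⟨Fin.castAdd kb iA, Fin.castAdd lb jA, by rw [hPA]; exact hAij⟩
    obtain ⟨M0, hM0⟩ := sat_exists (m := n) (n := n) P hPtrue
    have hne : {w | ∃ M : Fin n → Fin n → Bool, Saturating P M ∧ weight M = w}.Nonempty :=
      ⟨weight M0, M0, hM0, rfl⟩
    apply le_csInf hne
    rintro w ⟨M, hM, rfl⟩
    exact weight_ge_of_rows (main n M hM).1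
end

section
/- Let A be a 0-1 matrix, let P' be obtained from A by appending one new row at the bottom and one new column at the right whose only 1 entry is at their intersection, and let P be obtained from P' by the same operation. Then for all m, n large enough, ex(P,m,n) = ex(P',m−1,n−1) + m + n − 1 and sat(P,m,n) = sat(P',m−1,n−1) + m + n − 1. -/
/-- Extend a pattern `A` by a new last row and last column whose only `1` entry is at
their intersection. -/
def extendCorner {k l : ℕ} (A : Fin k → Fin l → Bool) :
    Fin (k + 1) → Fin (l + 1) → Bool :=
  fun i j =>
    if h : (i : ℕ) < k then
      (if h' : (j : ℕ) < l then A ⟨(i : ℕ), h⟩ ⟨(j : ℕ), h'⟩ else false)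
    else decide ((j : ℕ) = l)

variable {k l m n : ℕ}

@[simp]
lemma setOne_eq_true {M : Fin m → Fin n → Bool} {p x : Fin m} {q y : Fin n} :
    setOne M p q x y = true ↔ (x = p ∧ y = q) ∨ M x y = true := by
  unfold setOne
  split_ifs with h <;> simp [h]

lemma weight_setOne {M : Fin m → Fin n → Bool} {p : Fin m} {q : Fin n} (h : M p q = false) :
    weight (setOne M p q) = weight M + 1 := by
  unfold weight
  rw [← Finset.card_insert_of_notMem (s := Finset.univ.filter _) (a := (p, q)) (by simp [h])]
  congr 1
  ext ⟨x, y⟩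
  simp [or_comm]

lemma IsOcc.of_setOne {A : Fin k → Fin l → Bool} {M : Fin m → Fin n → Bool} {p : Fin m} {q : Fin n}
    {r : Fin k → Fin m} {c : Fin l → Fin n} (h : IsOcc A (setOne M p q) r c)
    (hpq : ∀ i j, A i j = true → r i = p → c j ≠ q) : IsOcc A M r c := by
  refine ⟨h.1, h.2.1, fun i j hij => ?_⟩
  have := h.2.2 i j hij
  simp only [setOne_eq_true] at this
  exact this.resolve_left fun ⟨hp, hq⟩ => hpq i j hij hp hq

lemma strictMono_snoc {α : Type*} [Preorder α] {f : Fin k → α} {x : α} (hf : StrictMono f)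
    (hx : ∀ i, f i < x) : StrictMono (Fin.snoc f x : Fin (k + 1) → α) := by
  intro i j hij
  cases j using Fin.lastCases with
  | last =>
    cases i using Fin.lastCases with
    | last => exact absurd hij (lt_irrefl _)
    | cast i => simpa using hx i
  | cast j =>
    cases i using Fin.lastCases with
    | last => exact absurd hij (not_lt.2 (Fin.le_last _))
    | cast i => simpa using hf (Fin.castSucc_lt_castSucc_iff.1 hij)

lemma exists_castSucc_comp_eq {r : Fin k → Fin (m + 1)} (hr : StrictMono r) {x : Fin (m + 1)}
    (hx : ∀ i, r i < x) : ∃ r' : Fin k → Fin m, StrictMono r' ∧ r = Fin.castSucc ∘ r' :=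
  ⟨fun i => (r i).castPred (Fin.ne_last_of_lt (hx i)),
    fun _ _ h => Fin.castPred_lt_castPred_iff.2 (hr h), funext fun _ => by simp⟩

section ExtendCorner

variable (A : Fin k → Fin l → Bool)

@[simp]
lemma extendCorner_castSucc_castSucc (i : Fin k) (j : Fin l) :
    extendCorner A i.castSucc j.castSucc = A i j := by
  simp [extendCorner]

@[simp]
lemma extendCorner_last_last : extendCorner A (Fin.last k) (Fin.last l) = true := by
  simp [extendCorner]

@[simp]
lemma extendCorner_castSucc_last (i : Fin k) : extendCorner A i.castSucc (Fin.last l) = false := by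
  simp [extendCorner]

@[simp]
lemma extendCorner_last_castSucc (j : Fin l) : extendCorner A (Fin.last k) j.castSucc = false := by
  simp [extendCorner, j.isLt.ne]

end ExtendCorner

lemma IsOcc.comp_castSucc {A : Fin k → Fin l → Bool} {M : Fin m → Fin n → Bool}
    {r : Fin (k + 1) → Fin m} {c : Fin (l + 1) → Fin n} (h : IsOcc (extendCorner A) M r c) :
    IsOcc A M (r ∘ Fin.castSucc) (c ∘ Fin.castSucc) :=
  ⟨h.1.comp Fin.strictMono_castSucc, h.2.1.comp Fin.strictMono_castSucc,
    fun i j hij => h.2.2 _ _ (by simpa using hij)⟩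

theorem contains_extendCorner_iff {A : Fin k → Fin l → Bool} {M : Fin m → Fin n → Bool} :
    Contains (extendCorner A) M ↔ ∃ r c u v, IsOcc A M r c ∧ M u v = true ∧
      (∀ i, r i < u) ∧ ∀ j, c j < v := by
  constructor
  · rintro ⟨r, c, hocc⟩
    exact ⟨_, _, r (Fin.last k), c (Fin.last l), IsOcc.comp_castSucc hocc,
      hocc.2.2 _ _ (extendCorner_last_last A), fun i => hocc.1 (Fin.castSucc_lt_last i),
      fun j => hocc.2.1 (Fin.castSucc_lt_last j)⟩
  · rintro ⟨r, c, u, v, ⟨hr, hc, hM⟩, huv, hu, hv⟩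
    refine ⟨Fin.snoc r u, Fin.snoc c v, strictMono_snoc hr hu, strictMono_snoc hc hv,
      fun i j hij => ?_⟩
    cases i using Fin.lastCases <;> cases j using Fin.lastCases <;> simp_all

def StrictNW (s t : Fin m × Fin n) : Prop :=
  s.1 < t.1 ∧ s.2 < t.2

section Antichain

variable {S : Finset (Fin (m + 1) × Fin (n + 1))}

-- Cells with the same value of `x + n - y` form a chain, and there are `m + n + 1` such values.
lemma card_le_of_isAntichain (hS : IsAntichain StrictNW (S : Set (Fin (m + 1) × Fin (n + 1)))) :
    S.card ≤ m + n + 1 := by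
  have hinj : Set.InjOn (fun s : Fin (m + 1) × Fin (n + 1) => (s.1 : ℕ) + n - s.2) S := by
    intro s hs s' hs' h
    have := s.2.isLt
    have := s'.2.isLt
    simp only at h
    rcases lt_trichotomy s.1 s'.1 with hx | hx | hx
    · exact absurd ⟨hx, by rw [Fin.lt_def] at hx ⊢; omega⟩
        (hS hs hs' fun h => by simp [h] at hx)
    · exact Prod.ext hx (Fin.ext (by rw [hx] at h; omega))
    · exact absurd ⟨hx, by rw [Fin.lt_def] at hx ⊢; omega⟩
        (hS hs' hs fun h => by simp [h] at hx)
  simpa using Finset.card_le_card_of_injOn (t := Finset.range (m + n + 1)) _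
    (fun s _ => by simp only [Finset.coe_range, Set.mem_Iio]; omega) hinj

lemma exists_mem_diag_of_isAntichain
    (hS : IsAntichain StrictNW (S : Set (Fin (m + 1) × Fin (n + 1))))
    (hcov : ∀ x, x ∈ S ∨ ∃ s ∈ S, StrictNW x s ∨ StrictNW s x) {t : ℕ} (ht : t ≤ m + n) :
    ∃ s ∈ S, (s.1 : ℕ) + n = t + s.2 := by
  by_contra! hno
  -- Walking down the diagonal `(t - n + i, n - t + i)`, `i ≤ L`, every cell has an element of
  -- `S` strictly south-east of it, since one strictly north-west of the next cell would be
  -- strictly north-west of that element; at the last cell `i = L` this is impossible.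
  set L := min (m - (t - n)) (n - (n - t))
  have hcell : ∀ i ≤ L, (∃ s ∈ S, t - n + i < (s.1 : ℕ) ∧ n - t + i < (s.2 : ℕ)) ∨
      ∃ s ∈ S, (s.1 : ℕ) < t - n + i ∧ (s.2 : ℕ) < n - t + i := by
    intro i hi
    rcases hcov (⟨t - n + i, by omega⟩, ⟨n - t + i, by omega⟩) with h | ⟨s, hs, h | h⟩
    · exact absurd (hno _ h) (by simp only; omega)
    · exact Or.inl ⟨s, hs, h⟩
    · exact Or.inr ⟨s, hs, h⟩
  have hSE : ∀ i ≤ L, ∃ s ∈ S, t - n + i < (s.1 : ℕ) ∧ n - t + i < (s.2 : ℕ) := by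
    intro i hi
    induction i with
    | zero => exact (hcell 0 hi).resolve_right fun ⟨s, _, h1, h2⟩ => by omega
    | succ i ih =>
      obtain ⟨s', hs', h1', h2'⟩ := ih (by omega)
      refine (hcell _ hi).resolve_right fun ⟨s, hs, h1, h2⟩ => ?_
      have hss' : StrictNW s s' := ⟨Fin.lt_def.2 (by omega),
        Fin.lt_def.2 (by omega)⟩
      exact hS hs hs' (fun h => by subst h; omega) hss'
  obtain ⟨s, -, h1, h2⟩ := hSE L le_rfl
  have := s.1.isLt
  have := s.2.isLt
  omega

lemma le_card_of_isAntichain (hS : IsAntichain StrictNW (S : Set (Fin (m + 1) × Fin (n + 1))))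
    (hcov : ∀ x, x ∈ S ∨ ∃ s ∈ S, StrictNW x s ∨ StrictNW s x) :
    m + n + 1 ≤ S.card := by
  have hsurj := Finset.card_le_card_of_surjOn (s := S) (t := Finset.range (m + n + 1))
    (fun s => (s.1 : ℕ) + n - s.2) fun t ht => ?_
  · simpa using hsurj
  simp only [Finset.coe_range, Set.mem_Iio] at ht
  obtain ⟨s, hs, h⟩ := exists_mem_diag_of_isAntichain hS hcov (t := t) (by omega)
  exact ⟨s, hs, by simp only; omega⟩

end Antichain

def IsSEMaxOne (M : Fin m → Fin n → Bool) (x : Fin m) (y : Fin n) : Prop :=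
  M x y = true ∧ ∀ u v, x < u → y < v → M u v = false

instance (M : Fin m → Fin n → Bool) (x : Fin m) (y : Fin n) : Decidable (IsSEMaxOne M x y) :=
  inferInstanceAs (Decidable (_ ∧ _))

def seMaxOnes (M : Fin m → Fin n → Bool) : Finset (Fin m × Fin n) :=
  Finset.univ.filter fun s => IsSEMaxOne M s.1 s.2

section SEMax

variable {M : Fin m → Fin n → Bool}

lemma not_isSEMaxOne_of_lt {x u : Fin m} {y v : Fin n} (huv : M u v = true) (hx : x < u)
    (hy : y < v) : ¬ IsSEMaxOne M x y :=
  fun h => by simp [h.2 u v hx hy] at huv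

lemma isAntichain_seMaxOnes : IsAntichain StrictNW (seMaxOnes M : Set (Fin m × Fin n)) := by
  intro s hs t ht _ hst
  simp only [seMaxOnes, Finset.coe_filter, Finset.mem_univ, true_and, Set.mem_ofPred_eq] at hs ht
  exact not_isSEMaxOne_of_lt ht.1 hst.1 hst.2 hs

lemma exists_isSEMaxOne_le {x : Fin m} {y : Fin n} (h : M x y = true) :
    ∃ u v, IsSEMaxOne M u v ∧ x ≤ u ∧ y ≤ v := by
  -- a `1` weakly south-east of `(x, y)` maximising the sum of its coordinates
  obtain ⟨s, hs, hmax⟩ := (Finset.univ.filter fun s : Fin m × Fin n =>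
      M s.1 s.2 = true ∧ x ≤ s.1 ∧ y ≤ s.2).exists_max_image (fun s => (s.1 : ℕ) + s.2)
    ⟨(x, y), by simp [h]⟩
  simp only [Finset.mem_filter, Finset.mem_univ, true_and] at hs hmax
  refine ⟨s.1, s.2, ⟨hs.1, fun u v hu hv => ?_⟩, hs.2⟩
  by_contra huv
  have := hmax (u, v) ⟨by simpa using huv, hs.2.1.trans hu.le, hs.2.2.trans hv.le⟩
  rw [Fin.lt_def] at hu hv
  simp only at this
  omega

end SEMax

lemma isSEMaxOne_last_row {M : Fin (m + 1) → Fin n → Bool} {y : Fin n}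
    (h : M (Fin.last m) y = true) : IsSEMaxOne M (Fin.last m) y :=
  ⟨h, fun u _ hu _ => absurd hu (not_lt.2 (Fin.le_last u))⟩

lemma isSEMaxOne_last_col {M : Fin m → Fin (n + 1) → Bool} {x : Fin m}
    (h : M x (Fin.last n) = true) : IsSEMaxOne M x (Fin.last n) :=
  ⟨h, fun _ v _ hv => absurd hv (not_lt.2 (Fin.le_last v))⟩

/-- The `1`s of `M` that are not south-east maximal; they all lie in the top-left `m × n`
submatrix. -/
def trimSEMax (M : Fin (m + 1) → Fin (n + 1) → Bool) : Fin m → Fin n → Bool :=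
  fun i j => M i.castSucc j.castSucc && !decide (IsSEMaxOne M i.castSucc j.castSucc)

def padOnes (M : Fin m → Fin n → Bool) : Fin (m + 1) → Fin (n + 1) → Bool :=
  Fin.lastCases (fun _ => true) fun i => Fin.lastCases true (M i)

@[simp]
lemma trimSEMax_eq_true {M : Fin (m + 1) → Fin (n + 1) → Bool} {i : Fin m} {j : Fin n} :
    trimSEMax M i j = true ↔
      M i.castSucc j.castSucc = true ∧ ¬ IsSEMaxOne M i.castSucc j.castSucc := by
  simp [trimSEMax]

section Pad

variable (M : Fin m → Fin n → Bool)

@[simp]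
lemma padOnes_castSucc_castSucc (i : Fin m) (j : Fin n) :
    padOnes M i.castSucc j.castSucc = M i j := by
  simp [padOnes]

@[simp]
lemma padOnes_last (y : Fin (n + 1)) : padOnes M (Fin.last m) y = true := by
  simp [padOnes]

@[simp]
lemma padOnes_castSucc_last (i : Fin m) : padOnes M i.castSucc (Fin.last n) = true := by
  simp [padOnes]

end Pad

lemma weight_eq_weight_trimSEMax_add_card (M : Fin (m + 1) → Fin (n + 1) → Bool) :
    weight M = weight (trimSEMax M) + (seMaxOnes M).card := by
  set ones := Finset.univ.filter fun s : Fin (m + 1) × Fin (n + 1) => M s.1 s.2 = true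
  have hnot : ones.filter (fun s => ¬ IsSEMaxOne M s.1 s.2) =
      (Finset.univ.filter fun s : Fin m × Fin n => trimSEMax M s.1 s.2 = true).map
        (Function.Embedding.prodMap Fin.castSuccEmb Fin.castSuccEmb) := by
    ext ⟨x, y⟩
    cases x using Fin.lastCases <;> cases y using Fin.lastCases <;> simp [ones]
    exacts [isSEMaxOne_last_row, isSEMaxOne_last_row, isSEMaxOne_last_col]
  have hmax : ones.filter (fun s => IsSEMaxOne M s.1 s.2) = seMaxOnes M := by
    ext s
    simp only [ones, seMaxOnes, Finset.mem_filter, Finset.mem_univ, true_and]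
    exact and_iff_right_of_imp And.left
  rw [weight, ← Finset.card_filter_add_card_filter_not (s := ones)
    (fun s => IsSEMaxOne M s.1 s.2), hnot, hmax, Finset.card_map, add_comm, weight]

lemma trimSEMax_padOnes (M : Fin m → Fin n → Bool) : trimSEMax (padOnes M) = M := by
  funext i j
  have : ¬ IsSEMaxOne (padOnes M) i.castSucc j.castSucc := not_isSEMaxOne_of_lt
    (padOnes_last M (Fin.last n)) (Fin.castSucc_lt_last i) (Fin.castSucc_lt_last j)
  cases h : M i j <;> simp [trimSEMax, h, this]

lemma card_seMaxOnes_padOnes (M : Fin m → Fin n → Bool) :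
    (seMaxOnes (padOnes M)).card = m + n + 1 := by
  refine le_antisymm (card_le_of_isAntichain isAntichain_seMaxOnes)
    (le_card_of_isAntichain isAntichain_seMaxOnes fun ⟨x, y⟩ => ?_)
  cases x using Fin.lastCases with
  | last => exact Or.inl (by simp [seMaxOnes, isSEMaxOne_last_row])
  | cast i =>
    cases y using Fin.lastCases with
    | last => exact Or.inl (by simp [seMaxOnes, isSEMaxOne_last_col])
    | cast j =>
      refine Or.inr ⟨(Fin.last m, Fin.last n), ?_, Or.inl
        ⟨Fin.castSucc_lt_last i, Fin.castSucc_lt_last j⟩⟩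
      simp [seMaxOnes, isSEMaxOne_last_row]

lemma weight_padOnes (M : Fin m → Fin n → Bool) :
    weight (padOnes M) = weight M + (m + n + 1) := by
  rw [weight_eq_weight_trimSEMax_add_card, trimSEMax_padOnes, card_seMaxOnes_padOnes]

section Surgery

variable {M : Fin m → Fin n → Bool}

lemma isSEMaxOne_of_isOcc {Q : Fin (k + 1) → Fin (l + 1) → Bool}
    (hQ : Q (Fin.last k) (Fin.last l) = true) (hav : Avoids (extendCorner Q) M)
    {r : Fin (k + 1) → Fin m} {c : Fin (l + 1) → Fin n} (hocc : IsOcc Q M r c) :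
    IsSEMaxOne M (r (Fin.last k)) (c (Fin.last l)) := by
  refine ⟨hocc.2.2 _ _ hQ, fun u v hu hv => ?_⟩
  by_contra huv
  exact hav (contains_extendCorner_iff.2 ⟨r, c, u, v, hocc, by simpa using huv,
    fun i => (hocc.1.monotone (Fin.le_last i)).trans_lt hu,
    fun j => (hocc.2.1.monotone (Fin.le_last j)).trans_lt hv⟩)

-- The new occurrence uses `(p, q)` either in its `A`-part or as its corner.
lemma isOcc_of_contains_setOne {A : Fin k → Fin l → Bool} (hav : Avoids (extendCorner A) M)
    {p : Fin m} {q : Fin n} (h : Contains (extendCorner A) (setOne M p q)) :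
    (∃ r c u v, IsOcc A (setOne M p q) r c ∧ M u v = true ∧ (∀ i, r i < u) ∧ (∀ j, c j < v) ∧
      p < u ∧ q < v) ∨
    ∃ r c, IsOcc A M r c ∧ (∀ i, r i < p) ∧ ∀ j, c j < q := by
  obtain ⟨r, c, u, v, hocc, huv, hu, hv⟩ := contains_extendCorner_iff.1 h
  by_cases hcorner : u = p ∧ v = q
  · obtain ⟨rfl, rfl⟩ := hcorner
    exact Or.inr ⟨r, c, hocc.of_setOne fun i _ _ hi => absurd hi (hu i).ne, hu, hv⟩
  have hMuv : M u v = true := by simpa [hcorner] using huv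
  by_cases huse : ∃ i j, A i j = true ∧ r i = p ∧ c j = q
  · obtain ⟨i, j, -, rfl, rfl⟩ := huse
    exact Or.inl ⟨r, c, u, v, hocc, hMuv, hu, hv, hu i, hv j⟩
  push Not at huse
  exact absurd (contains_extendCorner_iff.2 ⟨r, c, u, v, hocc.of_setOne huse, hMuv, hu, hv⟩) hav

lemma avoids_trimSEMax {Q : Fin (k + 1) → Fin (l + 1) → Bool}
    (hQ : Q (Fin.last k) (Fin.last l) = true) {M : Fin (m + 1) → Fin (n + 1) → Bool}
    (hav : Avoids (extendCorner Q) M) : Avoids Q (trimSEMax M) := by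
  rintro ⟨r, c, hr, hc, hM⟩
  have hocc : IsOcc Q M (Fin.castSucc ∘ r) (Fin.castSucc ∘ c) :=
    ⟨Fin.strictMono_castSucc.comp hr, Fin.strictMono_castSucc.comp hc,
      fun i j hij => (trimSEMax_eq_true.1 (hM i j hij)).1⟩
  exact (trimSEMax_eq_true.1 (hM _ _ hQ)).2 (isSEMaxOne_of_isOcc hQ hav hocc)

lemma avoids_padOnes {Q : Fin k → Fin l → Bool} (hav : Avoids Q M) :
    Avoids (extendCorner Q) (padOnes M) := by
  intro h
  obtain ⟨r, c, u, v, hocc, -, hu, hv⟩ := contains_extendCorner_iff.1 h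
  obtain ⟨r, hr, rfl⟩ := exists_castSucc_comp_eq hocc.1 hu
  obtain ⟨c, hc, rfl⟩ := exists_castSucc_comp_eq hocc.2.1 hv
  exact hav ⟨r, c, hr, hc, fun i j hij => by simpa using hocc.2.2 i j hij⟩

lemma setOne_padOnes (x : Fin m) (y : Fin n) :
    setOne (padOnes M) x.castSucc y.castSucc = padOnes (setOne M x y) := by
  funext i j
  cases i using Fin.lastCases <;> cases j using Fin.lastCases <;> simp [setOne]

lemma saturating_padOnes {Q : Fin k → Fin l → Bool} (hsat : Saturating Q M) :
    Saturating (extendCorner Q) (padOnes M) := by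
  refine ⟨avoids_padOnes hsat.1, fun x y h0 => ?_⟩
  cases x using Fin.lastCases with
  | last => simp at h0
  | cast x =>
    cases y using Fin.lastCases with
    | last => simp at h0
    | cast y =>
      obtain ⟨r, c, hr, hc, hM⟩ := hsat.2 x y (by simpa using h0)
      rw [setOne_padOnes]
      exact contains_extendCorner_iff.2 ⟨Fin.castSucc ∘ r, Fin.castSucc ∘ c, Fin.last m,
        Fin.last n, ⟨Fin.strictMono_castSucc.comp hr, Fin.strictMono_castSucc.comp hc,
          fun i j hij => by simpa using hM i j hij⟩, by simp, fun i => Fin.castSucc_lt_last _,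
        fun j => Fin.castSucc_lt_last _⟩

end Surgery

section Trim

variable {M : Fin (m + 1) → Fin (n + 1) → Bool} {p : Fin m} {q : Fin n}

lemma contains_setOne_trimSEMax_of_lt {Q : Fin k → Fin l → Bool} {r : Fin k → Fin (m + 1)}
    {c : Fin l → Fin (n + 1)} {u : Fin (m + 1)} {v : Fin (n + 1)}
    (hocc : IsOcc Q (setOne M p.castSucc q.castSucc) r c) (huv : M u v = true)
    (hu : ∀ i, r i < u) (hv : ∀ j, c j < v) : Contains Q (setOne (trimSEMax M) p q) := by
  obtain ⟨r, hr, rfl⟩ := exists_castSucc_comp_eq hocc.1 hu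
  obtain ⟨c, hc, rfl⟩ := exists_castSucc_comp_eq hocc.2.1 hv
  refine ⟨r, c, hr, hc, fun i j hij => ?_⟩
  have h := hocc.2.2 i j hij
  simp only [Function.comp_apply, setOne_eq_true, Fin.castSucc_inj] at h
  exact setOne_eq_true.2 (h.imp_right fun hM =>
    trimSEMax_eq_true.2 ⟨hM, not_isSEMaxOne_of_lt huv (hu i) (hv j)⟩)

-- `(p, q)` replaces the corner of the occurrence; the isolated corner of `extendCorner A`
-- makes every other `1` of the occurrence strictly north-west of the old corner.
lemma contains_setOne_trimSEMax_of_le {A : Fin k → Fin l → Bool}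
    {r : Fin (k + 1) → Fin (m + 1)} {c : Fin (l + 1) → Fin (n + 1)}
    (hocc : IsOcc (extendCorner A) M r c) (hp : r (Fin.last k) ≤ p.castSucc)
    (hq : c (Fin.last l) ≤ q.castSucc) :
    Contains (extendCorner A) (setOne (trimSEMax M) p q) := by
  have hA := IsOcc.comp_castSucc hocc
  have hu : ∀ i, (r ∘ Fin.castSucc) i < r (Fin.last k) := fun i => hocc.1 (Fin.castSucc_lt_last i)
  have hv : ∀ j, (c ∘ Fin.castSucc) j < c (Fin.last l) :=
    fun j => hocc.2.1 (Fin.castSucc_lt_last j)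
  obtain ⟨r', hr', hrr⟩ := exists_castSucc_comp_eq hA.1 hu
  obtain ⟨c', hc', hcc⟩ := exists_castSucc_comp_eq hA.2.1 hv
  rw [hrr] at hu hA
  rw [hcc] at hv hA
  refine contains_extendCorner_iff.2 ⟨r', c', p, q, ⟨hr', hc', fun i j hij => ?_⟩, by simp,
    fun i => Fin.castSucc_lt_castSucc_iff.1 ((hu i).trans_le hp),
    fun j => Fin.castSucc_lt_castSucc_iff.1 ((hv j).trans_le hq)⟩
  exact setOne_eq_true.2 (Or.inr (trimSEMax_eq_true.2 ⟨hA.2.2 i j hij,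
    not_isSEMaxOne_of_lt (hocc.2.2 _ _ (extendCorner_last_last A)) (hu i) (hv j)⟩))

theorem saturating_trimSEMax {A : Fin k → Fin l → Bool}
    (hsat : Saturating (extendCorner (extendCorner A)) M) :
    Saturating (extendCorner A) (trimSEMax M) := by
  refine ⟨avoids_trimSEMax (extendCorner_last_last A) hsat.1, fun p q h0 => ?_⟩
  by_cases hSE : IsSEMaxOne M p.castSucc q.castSucc
  · -- then `(p + 1, q + 1)` is a `0` of `M`, and no `1` lies strictly south-east of it
    have h0' : M p.succ q.succ = false := hSE.2 _ _ Fin.castSucc_lt_succ Fin.castSucc_lt_succ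
    rcases isOcc_of_contains_setOne hsat.1 (hsat.2 _ _ h0') with
      ⟨-, -, u, v, -, huv, -, -, hu, hv⟩ | ⟨r, c, hocc, hr, hc⟩
    · exact absurd hSE (not_isSEMaxOne_of_lt huv (Fin.castSucc_lt_succ.trans hu)
        (Fin.castSucc_lt_succ.trans hv))
    · exact contains_setOne_trimSEMax_of_le hocc (Fin.le_castSucc_iff.2 (hr _))
        (Fin.le_castSucc_iff.2 (hc _))
  · have h0' : M p.castSucc q.castSucc = false := by simpa [trimSEMax, hSE] using h0
    rcases isOcc_of_contains_setOne hsat.1 (hsat.2 _ _ h0') with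
      ⟨r, c, u, v, hocc, huv, hu, hv, -, -⟩ | ⟨r, c, hocc, hr, hc⟩
    · exact contains_setOne_trimSEMax_of_lt hocc huv hu hv
    · exact contains_setOne_trimSEMax_of_le hocc (hr _).le (hc _).le

-- A `0` of `M` either has a `1` strictly south-east of it or is strictly south-east of the
-- corner of an occurrence of `Q`; a `1` is south-east maximal or has a `1` south-east of it.
lemma mem_or_strictNW_seMaxOnes {Q : Fin (k + 1) → Fin (l + 1) → Bool}
    (hQ : Q (Fin.last k) (Fin.last l) = true) (hsat : Saturating (extendCorner Q) M)
    (x : Fin (m + 1) × Fin (n + 1)) :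
    x ∈ seMaxOnes M ∨ ∃ s ∈ seMaxOnes M, StrictNW x s ∨ StrictNW s x := by
  have hSE : ∀ u v, x.1 < u → x.2 < v → M u v = true → ∃ s ∈ seMaxOnes M, StrictNW x s := by
    intro u v hu hv huv
    obtain ⟨u', v', hmax, hu', hv'⟩ := exists_isSEMaxOne_le huv
    exact ⟨(u', v'), by simpa [seMaxOnes] using hmax, hu.trans_le hu', hv.trans_le hv'⟩
  cases hx : M x.1 x.2
  · rcases isOcc_of_contains_setOne hsat.1 (hsat.2 _ _ hx) with
      ⟨-, -, u, v, -, huv, -, -, hu, hv⟩ | ⟨r, c, hocc, hr, hc⟩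
    · obtain ⟨s, hs, hxs⟩ := hSE u v hu hv huv
      exact Or.inr ⟨s, hs, Or.inl hxs⟩
    · refine Or.inr ⟨(r (Fin.last k), c (Fin.last l)), ?_, Or.inr ⟨hr _, hc _⟩⟩
      simpa [seMaxOnes] using isSEMaxOne_of_isOcc hQ hsat.1 hocc
  · by_cases hmax : IsSEMaxOne M x.1 x.2
    · exact Or.inl (by simpa [seMaxOnes] using hmax)
    · obtain ⟨u, v, hu, hv, huv⟩ : ∃ u v, x.1 < u ∧ x.2 < v ∧ M u v = true := by
        simpa [IsSEMaxOne, hx] using hmax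
      obtain ⟨s, hs, hxs⟩ := hSE u v hu hv huv
      exact Or.inr ⟨s, hs, Or.inl hxs⟩

end Trim

section Extremal

variable {R : Fin k → Fin l → Bool}

lemma weight_le_mul (M : Fin m → Fin n → Bool) : weight M ≤ m * n :=
  (Finset.card_filter_le _ _).trans (by simp)

lemma bddAbove_weights_avoiding (m n : ℕ) :
    BddAbove {w | ∃ M : Fin m → Fin n → Bool, Avoids R M ∧ weight M = w} :=
  ⟨m * n, by rintro _ ⟨M, -, rfl⟩; exact weight_le_mul M⟩

lemma weight_le_exF {M : Fin m → Fin n → Bool} (hav : Avoids R M) : weight M ≤ exF R m n :=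
  le_csSup (bddAbove_weights_avoiding m n) ⟨M, hav, rfl⟩

lemma exists_weight_eq_exF (hR : ∃ i j, R i j = true) (m n : ℕ) :
    ∃ M : Fin m → Fin n → Bool, Avoids R M ∧ weight M = exF R m n := by
  obtain ⟨i, j, hij⟩ := hR
  have hzero : Avoids R fun (_ : Fin m) (_ : Fin n) => false :=
    fun ⟨_, _, _, _, h⟩ => by simpa using h i j hij
  refine Nat.sSup_mem ?_ (bddAbove_weights_avoiding m n)
  exact ⟨_, _, hzero, rfl⟩

lemma saturating_of_weight_eq_exF {M : Fin m → Fin n → Bool} (hav : Avoids R M)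
    (hw : weight M = exF R m n) : Saturating R M := by
  refine ⟨hav, fun p q h0 => ?_⟩
  by_contra hp
  have := weight_le_exF hp
  rw [weight_setOne h0] at this
  omega

lemma satF_le_weight {M : Fin m → Fin n → Bool} (hsat : Saturating R M) :
    satF R m n ≤ weight M :=
  Nat.sInf_le ⟨M, hsat, rfl⟩

lemma exists_weight_eq_satF (hR : ∃ i j, R i j = true) (m n : ℕ) :
    ∃ M : Fin m → Fin n → Bool, Saturating R M ∧ weight M = satF R m n := by
  obtain ⟨M, hav, hw⟩ := exists_weight_eq_exF hR m n
  exact Nat.sInf_mem (s := {w | ∃ M : Fin m → Fin n → Bool, Saturating R M ∧ weight M = w})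
    ⟨_, M, saturating_of_weight_eq_exF hav hw, rfl⟩

end Extremal

theorem exF_extendCorner {Q : Fin (k + 1) → Fin (l + 1) → Bool}
    (hQ : Q (Fin.last k) (Fin.last l) = true) (m n : ℕ) :
    exF (extendCorner Q) (m + 1) (n + 1) = exF Q m n + (m + n + 1) := by
  apply le_antisymm
  · obtain ⟨M, hav, hw⟩ := exists_weight_eq_exF ⟨_, _, extendCorner_last_last Q⟩ (m + 1) (n + 1)
    rw [← hw, weight_eq_weight_trimSEMax_add_card]
    exact add_le_add (weight_le_exF (avoids_trimSEMax hQ hav))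
      (card_le_of_isAntichain isAntichain_seMaxOnes)
  · obtain ⟨M, hav, hw⟩ := exists_weight_eq_exF ⟨_, _, hQ⟩ m n
    rw [← hw, ← weight_padOnes]
    exact weight_le_exF (avoids_padOnes hav)

theorem satF_extendCorner_extendCorner (A : Fin k → Fin l → Bool) (m n : ℕ) :
    satF (extendCorner (extendCorner A)) (m + 1) (n + 1) =
      satF (extendCorner A) m n + (m + n + 1) := by
  apply le_antisymm
  · obtain ⟨M, hsat, hw⟩ := exists_weight_eq_satF ⟨_, _, extendCorner_last_last A⟩ m n
    rw [← hw, ← weight_padOnes]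
    exact satF_le_weight (saturating_padOnes hsat)
  · obtain ⟨M, hsat, hw⟩ :=
      exists_weight_eq_satF ⟨_, _, extendCorner_last_last (extendCorner A)⟩ (m + 1) (n + 1)
    rw [← hw, weight_eq_weight_trimSEMax_add_card]
    exact add_le_add (satF_le_weight (saturating_trimSEMax hsat))
      (le_card_of_isAntichain isAntichain_seMaxOnes
        (mem_or_strictNW_seMaxOnes (extendCorner_last_last A) hsat))

/-- with `P' = extendCorner A` and `P = extendCorner P'`, for all
`m, n` large enough, `ex(P,m,n) = ex(P',m-1,n-1) + m + n - 1` and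
`sat(P,m,n) = sat(P',m-1,n-1) + m + n - 1`. -/
theorem sat_ex_extendCorner {k l : ℕ} (A : Fin k → Fin l → Bool) :
    ∃ m₀ n₀ : ℕ, ∀ m n : ℕ, m₀ ≤ m → n₀ ≤ n →
      exF (extendCorner (extendCorner A)) m n
          = exF (extendCorner A) (m - 1) (n - 1) + m + n - 1 ∧
      satF (extendCorner (extendCorner A)) m n
          = satF (extendCorner A) (m - 1) (n - 1) + m + n - 1 := by
  refine ⟨1, 1, fun m n hm hn => ?_⟩
  obtain ⟨m, rfl⟩ := Nat.exists_eq_add_of_le' hm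
  obtain ⟨n, rfl⟩ := Nat.exists_eq_add_of_le' hn
  simp only [Nat.add_sub_cancel]
  rw [exF_extendCorner (extendCorner_last_last A), satF_extendCorner_extendCorner]
  omega
end

section
/- sat(I_k, m, n) = ex(I_k, m, n) = (k−1)(m + n − (k−1)) for all m, n ≥ k, where I_k is the k×k identity matrix. -/
/-- The `k × k` identity pattern. -/
def Imat (k : ℕ) : Fin k → Fin k → Bool := fun i j => decide (i = j)

/-!
The `1`s of a matrix on one diagonal are pairwise comparable in the strict north-west order, so a
matrix avoiding `I_k` has at most `k - 1` ones on every diagonal. Conversely, let `M` be saturating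
and `p` a `0` of `M`. Flipping `p` creates a copy of `I_k` through `p`: a chain of `t` ones
north-west of `p` and one of `k - 1 - t` ones south-east of `p`. Walking up the diagonal of `p`,
a chain of `s` ones north-west of `p` forces `s` ones on that diagonal north-west of `p`; by the
180° rotation, the same holds south-east of `p`. So a diagonal of
`M` is full or carries at least `k - 1` ones, and every avoiding matrix weighs at most as much as
every saturating one. The matrix whose first `k - 1` rows and columns are full is both avoiding and
saturating, of weight `(k - 1)(m + n - (k - 1))`.
-/

section

open Finset

variable {k m n : ℕ}

lemma contains_imat_iff {M : Fin m → Fin n → Bool} :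
    Contains (Imat k) M ↔ ∃ r : Fin k → Fin m, ∃ c : Fin k → Fin n,
      StrictMono r ∧ StrictMono c ∧ ∀ i, M (r i) (c i) = true := by
  simp [Contains, Imat]

lemma setOne_of_ne {M : Fin m → Fin n → Bool} {p i : Fin m} {q j : Fin n}
    (h : (i, j) ≠ (p, q)) : setOne M p q i j = M i j := by
  simp_all [setOne]

def ones (M : Fin m → Fin n → Bool) : Finset (Fin m × Fin n) :=
  univ.filter fun p => M p.1 p.2 = true

@[simp]
lemma mem_ones {M : Fin m → Fin n → Bool} {p : Fin m × Fin n} :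
    p ∈ ones M ↔ M p.1 p.2 = true := by
  simp [ones]

lemma weight_eq_card_ones (M : Fin m → Fin n → Bool) : weight M = #(ones M) := rfl

def Precedes (a b : Fin m × Fin n) : Prop := a.1 < b.1 ∧ a.2 < b.2

instance : DecidableRel (Precedes : Fin m × Fin n → Fin m × Fin n → Prop) :=
  fun _ _ => inferInstanceAs (Decidable (_ ∧ _))

def diagIndex (p : Fin m × Fin n) : ℤ := (p.1 : ℤ) - p.2

lemma isChain_diagIndex (d : ℤ) : IsChain Precedes {p : Fin m × Fin n | diagIndex p = d} := by
  rintro a (ha : diagIndex a = d) b (hb : diagIndex b = d) hne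
  simp only [diagIndex] at ha hb
  have hrow : (a.1 : ℕ) ≠ b.1 := fun h => hne (Prod.ext (Fin.ext h) (Fin.ext (by omega)))
  simp only [Precedes, Fin.lt_def]
  omega

lemma card_lt_of_isChain {M : Fin m → Fin n → Bool} (hM : Avoids (Imat k) M)
    {S : Finset (Fin m × Fin n)} (hS : S ⊆ ones M)
    (hc : IsChain Precedes (S : Set (Fin m × Fin n))) : #S < k := by
  by_contra! hk
  obtain ⟨T, hTS, hT⟩ := exists_subset_card_eq hk
  have hcT : IsChain Precedes (T : Set (Fin m × Fin n)) := hc.mono (coe_subset.2 hTS)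
  have hinj : Set.InjOn Prod.fst (T : Set (Fin m × Fin n)) := fun a ha b hb hab => by
    by_contra hne
    rcases hcT ha hb hne with h | h
    · exact h.1.ne hab
    · exact h.1.ne hab.symm
  have hrows : #(T.image Prod.fst) = k := (card_image_of_injOn hinj).trans hT
  set r := (T.image Prod.fst).orderEmbOfFin hrows
  have hx : ∀ i, ∃ x ∈ T, x.1 = r i := fun i => mem_image.1 (orderEmbOfFin_mem _ hrows i)
  choose x hxT hxr using hx
  have hmono : ∀ i j, i < j → Precedes (x i) (x j) := by
    intro i j hij
    have hlt : (x i).1 < (x j).1 := by rw [hxr, hxr]; exact r.strictMono hij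
    rcases hcT (hxT i) (hxT j) (fun h => hlt.ne (congrArg Prod.fst h)) with h | h
    · exact h
    · exact absurd h.1 hlt.asymm
  exact hM (contains_imat_iff.2 ⟨fun i => (x i).1, fun i => (x i).2, fun i j h => (hmono i j h).1,
    fun i j h => (hmono i j h).2, fun i => mem_ones.1 (hS (hTS (hxT i)))⟩)

lemma Saturating.exists_chain_through {M : Fin m → Fin n → Bool} (hM : Saturating (Imat k) M)
    {p : Fin m × Fin n} (hp : M p.1 p.2 = false) :
    ∃ C ⊆ ones M, IsChain Precedes (C : Set (Fin m × Fin n)) ∧ #C + 1 = k ∧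
      ∀ x ∈ C, Precedes x p ∨ Precedes p x := by
  obtain ⟨r, c, hr, hc, hocc⟩ := contains_imat_iff.1 (hM.2 p.1 p.2 hp)
  set x : Fin k → Fin m × Fin n := fun i => (r i, c i)
  have hx : ∀ i j, i < j → Precedes (x i) (x j) := fun i j h => ⟨hr h, hc h⟩
  have hxinj : x.Injective := fun i j h => hr.injective (congrArg Prod.fst h)
  have hone : ∀ i, x i ≠ p → M (r i) (c i) = true := fun i hi => by
    rw [← setOne_of_ne (M := M) hi]
    exact hocc i
  obtain ⟨i₀, hi₀⟩ : ∃ i₀, x i₀ = p := by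
    by_contra! hne
    exact hM.1 (contains_imat_iff.2 ⟨r, c, hr, hc, fun i => hone i (hne i)⟩)
  refine ⟨(univ.erase i₀).image x, ?_, ?_, ?_, ?_⟩
  · simp only [subset_iff, mem_image, mem_erase]
    rintro _ ⟨i, ⟨hi, -⟩, rfl⟩
    exact mem_ones.2 (hone i fun h => hi (hxinj (h.trans hi₀.symm)))
  · rw [coe_image]
    rintro _ ⟨i, -, rfl⟩ _ ⟨j, -, rfl⟩ hne
    exact (lt_or_gt_of_ne fun h => hne (congrArg x h)).imp (hx i j) (hx j i)
  · rw [card_image_of_injective _ hxinj, card_erase_of_mem (mem_univ _), card_univ,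
      Fintype.card_fin]
    have := i₀.pos
    omega
  · simp only [mem_image, mem_erase]
    rintro _ ⟨i, ⟨hi, -⟩, rfl⟩
    rw [← hi₀]
    exact (lt_or_gt_of_ne hi).imp (hx i i₀) (hx i₀ i)

def onesBefore (M : Fin m → Fin n → Bool) (p : Fin m × Fin n) : Finset (Fin m × Fin n) :=
  (ones M).filter fun q => diagIndex q = diagIndex p ∧ q.1 < p.1

lemma onesBefore_subset_onesBefore {M : Fin m → Fin n → Bool} {p q : Fin m × Fin n}
    (hd : diagIndex q = diagIndex p) (hlt : q.1 < p.1) : onesBefore M q ⊆ onesBefore M p := by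
  intro x hx
  simp only [onesBefore, mem_filter] at hx ⊢
  exact ⟨hx.1, hx.2.1.trans hd, hx.2.2.trans hlt⟩

/-- Step from `p` to the cell `q` just north-west of it: if `q` is a `1`, drop the last element
of `S`; if `q` is a `0`, the part south-east of `q` of the chain through `q` extends `S`, so its
part north-west of `q` is at least as long as `S`. -/
theorem Saturating.card_le_card_onesBefore {M : Fin m → Fin n → Bool}
    (hM : Saturating (Imat k) M) (p : Fin m × Fin n) (S : Finset (Fin m × Fin n))
    (hS : S ⊆ ones M) (hc : IsChain Precedes (S : Set (Fin m × Fin n)))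
    (hSp : ∀ x ∈ S, Precedes x p) : #S ≤ #(onesBefore M p) := by
  rcases S.eq_empty_or_nonempty with rfl | hne
  · simp
  obtain ⟨x, hx, hxmax⟩ := S.exists_max_image Prod.fst hne
  have hxp := hSp x hx
  simp only [Precedes, Fin.lt_def] at hxp
  set q : Fin m × Fin n := (⟨p.1 - 1, by omega⟩, ⟨p.2 - 1, by omega⟩)
  have hqp : diagIndex q = diagIndex p := by simp [q, diagIndex]; omega
  have hqp' : q.1 < p.1 := by simp [q, Fin.lt_def]; omega
  have hSq : ∀ y ∈ S, y.1 ≤ q.1 ∧ y.2 ≤ q.2 := fun y hy => by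
    have := hSp y hy
    simp only [Precedes, Fin.lt_def] at this
    simp [q, Fin.le_def]; omega
  have hmono := onesBefore_subset_onesBefore (M := M) hqp hqp'
  by_cases hqM : M q.1 q.2 = true
  · have hlast : ∀ y ∈ S.erase x, Precedes y q := fun y hy => by
      obtain ⟨hyx, hy⟩ := mem_erase.1 hy
      rcases hc hy hx hyx with h | h
      · exact ⟨h.1.trans_le (hSq x hx).1, h.2.trans_le (hSq x hx).2⟩
      · exact absurd (hxmax y hy) (not_le.2 h.1)
    have ih := Saturating.card_le_card_onesBefore hM q (S.erase x)
      ((S.erase_subset x).trans hS) (hc.mono (coe_subset.2 (S.erase_subset x))) hlast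
    have hlt : #(onesBefore M q) < #(onesBefore M p) := by
      refine card_lt_card ((ssubset_iff_of_subset hmono).2 ⟨q, ?_, ?_⟩)
      · simp [onesBefore, hqM, hqp, hqp']
      · simp [onesBefore]
    have := card_erase_add_one hx
    omega
  · obtain ⟨C, hCM, hCc, hCk, hCq⟩ := hM.exists_chain_through (eq_false_of_ne_true hqM)
    set lo := C.filter (Precedes · q)
    set hi := C.filter (¬ Precedes · q)
    have hpart : #lo + #hi = #C := card_filter_add_card_filter_not _
    have hShi : ∀ y ∈ S, ∀ z ∈ hi, Precedes y z := fun y hy z hz => by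
      obtain ⟨hzC, hz⟩ := mem_filter.1 hz
      have hqz := (hCq z hzC).resolve_left hz
      exact ⟨(hSq y hy).1.trans_lt hqz.1, (hSq y hy).2.trans_lt hqz.2⟩
    have hdisj : Disjoint S hi := disjoint_left.2 fun y hy hyhi => (hShi y hy y hyhi).1.false
    have hlong : #(S ∪ hi) < k := by
      refine card_lt_of_isChain hM.1 (union_subset hS ((filter_subset _ _).trans hCM)) ?_
      rw [coe_union]
      exact isChain_union.2 ⟨hc, hCc.mono (coe_subset.2 (filter_subset _ _)),
        fun y hy z hz _ => Or.inl (hShi y hy z hz)⟩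
    have ih := Saturating.card_le_card_onesBefore hM q lo ((filter_subset _ _).trans hCM)
      (hCc.mono (coe_subset.2 (filter_subset _ _))) fun z hz => (mem_filter.1 hz).2
    rw [card_union_of_disjoint hdisj] at hlong
    have := card_le_card hmono
    omega
termination_by p.1.val
decreasing_by all_goals exact hqp'

def rot180 (M : Fin m → Fin n → Bool) : Fin m → Fin n → Bool := fun i j => M i.rev j.rev

@[simp]
lemma rot180_rot180 (M : Fin m → Fin n → Bool) : rot180 (rot180 M) = M := by
  funext i j
  simp [rot180]

lemma rot180_setOne (M : Fin m → Fin n → Bool) (p : Fin m) (q : Fin n) :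
    rot180 (setOne M p q) = setOne (rot180 M) p.rev q.rev := by
  funext i j
  simp [rot180, setOne, Fin.rev_eq_iff]

lemma contains_rot180 {M : Fin m → Fin n → Bool} (h : Contains (Imat k) M) :
    Contains (Imat k) (rot180 M) := by
  obtain ⟨r, c, hr, hc, hocc⟩ := contains_imat_iff.1 h
  exact contains_imat_iff.2 ⟨fun i => (r i.rev).rev, fun i => (c i.rev).rev,
    fun i j h => Fin.rev_lt_rev.2 (hr (Fin.rev_lt_rev.2 h)),
    fun i j h => Fin.rev_lt_rev.2 (hc (Fin.rev_lt_rev.2 h)),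
    fun i => by simpa [rot180] using hocc _⟩

lemma saturating_rot180 {M : Fin m → Fin n → Bool} (hM : Saturating (Imat k) M) :
    Saturating (Imat k) (rot180 M) := by
  refine ⟨fun h => hM.1 ?_, fun p q hpq => ?_⟩
  · simpa using contains_rot180 h
  · simpa [rot180_setOne] using contains_rot180 (hM.2 p.rev q.rev hpq)

def revCell (p : Fin m × Fin n) : Fin m × Fin n := (p.1.rev, p.2.rev)

lemma revCell_injective : (revCell : Fin m × Fin n → Fin m × Fin n).Injective :=
  fun a b h => by simpa [revCell, Prod.ext_iff] using h

lemma precedes_revCell {a b : Fin m × Fin n} :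
    Precedes (revCell a) (revCell b) ↔ Precedes b a := by
  simp [Precedes, revCell]

lemma Saturating.le_card_diagIndex_of_eq_false {M : Fin m → Fin n → Bool}
    (hM : Saturating (Imat k) M) {p : Fin m × Fin n} (hp : M p.1 p.2 = false) :
    k - 1 ≤ #((ones M).filter (diagIndex · = diagIndex p)) := by
  obtain ⟨C, hCM, hCc, hCk, hCp⟩ := hM.exists_chain_through hp
  set lo := C.filter (Precedes · p)
  set hi := C.filter (¬ Precedes · p)
  have hpart : #lo + #hi = #C := card_filter_add_card_filter_not _
  have hlo : #lo ≤ #(onesBefore M p) :=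
    hM.card_le_card_onesBefore p lo ((filter_subset _ _).trans hCM)
      (hCc.mono (coe_subset.2 (filter_subset _ _))) fun z hz => (mem_filter.1 hz).2
  -- the `1`s south-east of `p` on its diagonal are those north-west of `revCell p` in `rot180 M`
  set after := (onesBefore (rot180 M) (revCell p)).image revCell
  have hhi : #hi ≤ #after := by
    rw [card_image_of_injective _ revCell_injective,
      ← card_image_of_injective _ revCell_injective]
    refine (saturating_rot180 hM).card_le_card_onesBefore _ _ ?_ ?_ ?_
    · intro z hz
      obtain ⟨y, hy, rfl⟩ := mem_image.1 hz
      simpa [rot180, revCell] using hCM (mem_filter.1 hy).1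
    · rw [coe_image]
      rintro _ ⟨a, ha, rfl⟩ _ ⟨b, hb, rfl⟩ hne
      have := hCc.mono (coe_subset.2 (filter_subset _ _)) ha hb fun h => hne (h ▸ rfl)
      simpa only [precedes_revCell, or_comm] using this
    · intro z hz
      obtain ⟨y, hy, rfl⟩ := mem_image.1 hz
      obtain ⟨hyC, hy⟩ := mem_filter.1 hy
      exact precedes_revCell.2 ((hCp y hyC).resolve_left hy)
  have hsub : onesBefore M p ∪ after ⊆ (ones M).filter (diagIndex · = diagIndex p) := by
    intro z hz
    simp only [after, mem_union, mem_image, onesBefore, mem_filter, mem_ones] at hz ⊢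
    rcases hz with ⟨hz, hzp, -⟩ | ⟨y, ⟨hy, hyp, -⟩, rfl⟩
    · exact ⟨hz, hzp⟩
    · refine ⟨hy, ?_⟩
      simp only [diagIndex, revCell, Fin.val_rev] at hyp ⊢
      omega
  have hdisj : Disjoint (onesBefore M p) after := by
    refine disjoint_left.2 fun z hz hz' => ?_
    obtain ⟨y, hy, rfl⟩ := mem_image.1 hz'
    have h1 := (mem_filter.1 hz).2.2
    have h2 := (mem_filter.1 hy).2.2
    simp only [revCell, Fin.lt_def, Fin.val_rev] at h1 h2
    omega
  have := card_le_card hsub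
  rw [card_union_of_disjoint hdisj] at this
  omega

lemma card_diagIndex_le_of_avoids_of_saturating {A M : Fin m → Fin n → Bool}
    (hA : Avoids (Imat k) A) (hM : Saturating (Imat k) M) (d : ℤ) :
    #((ones A).filter (diagIndex · = d)) ≤ #((ones M).filter (diagIndex · = d)) := by
  by_cases hfull : ∀ p : Fin m × Fin n, diagIndex p = d → M p.1 p.2 = true
  · refine card_le_card fun p hp => ?_
    obtain ⟨-, hpd⟩ := mem_filter.1 hp
    exact mem_filter.2 ⟨mem_ones.2 (hfull p hpd), hpd⟩
  · push Not at hfull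
    obtain ⟨p, rfl, hp⟩ := hfull
    have hlt : #((ones A).filter (diagIndex · = diagIndex p)) < k :=
      card_lt_of_isChain hA (filter_subset _ _)
        ((isChain_diagIndex (diagIndex p)).mono fun q hq => (mem_filter.1 hq).2)
    have := hM.le_card_diagIndex_of_eq_false (eq_false_of_ne_true hp)
    omega

theorem weight_le_weight_of_avoids_of_saturating {A M : Fin m → Fin n → Bool}
    (hA : Avoids (Imat k) A) (hM : Saturating (Imat k) M) : weight A ≤ weight M := by
  have hdiag : ∀ B : Fin m → Fin n → Bool,
      Set.MapsTo diagIndex (ones B : Set (Fin m × Fin n)) (univ.image diagIndex : Finset ℤ) :=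
    fun _ p _ => mem_coe.2 (mem_image_of_mem _ (mem_univ p))
  rw [weight_eq_card_ones, weight_eq_card_ones, card_eq_sum_card_fiberwise (hdiag A),
    card_eq_sum_card_fiberwise (hdiag M)]
  exact sum_le_sum fun d _ => card_diagIndex_le_of_avoids_of_saturating hA hM d

def lShape (k m n : ℕ) : Fin m → Fin n → Bool :=
  fun i j => decide ((i : ℕ) < k - 1 ∨ (j : ℕ) < k - 1)

lemma le_val_apply_of_strictMono {a b : ℕ} {r : Fin a → Fin b} (hr : StrictMono r)
    (i : Fin a) : (i : ℕ) ≤ r i := by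
  suffices h : ∀ j (hj : j < a), j ≤ r ⟨j, hj⟩ from h i i.isLt
  intro j hj
  induction j with
  | zero => exact Nat.zero_le _
  | succ j ih =>
    have hstep : r ⟨j, by omega⟩ < r ⟨j + 1, hj⟩ := hr (Fin.mk_lt_mk.2 j.lt_succ_self)
    have := ih (by omega)
    rw [Fin.lt_def] at hstep
    omega

lemma avoids_lShape (hk : 0 < k) : Avoids (Imat k) (lShape k m n) := by
  intro h
  obtain ⟨r, c, hr, hc, hocc⟩ := contains_imat_iff.1 h
  have hlast := hocc ⟨k - 1, by omega⟩
  have hr' := le_val_apply_of_strictMono hr ⟨k - 1, by omega⟩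
  have hc' := le_val_apply_of_strictMono hc ⟨k - 1, by omega⟩
  simp only [lShape, decide_eq_true_eq] at hlast hr' hc'
  omega

lemma saturating_lShape (hk : 0 < k) : Saturating (Imat k) (lShape k m n) := by
  refine ⟨avoids_lShape hk, fun p q hpq => contains_imat_iff.2 ?_⟩
  simp only [lShape, decide_eq_false_iff_not, not_or, not_lt] at hpq
  -- the occurrence runs down the diagonal of the full corner and ends at the new `1`
  have hmono : ∀ {a} (x : Fin a) (hx : k - 1 ≤ x), StrictMono fun i : Fin k =>
      if h : (i : ℕ) < k - 1 then (⟨i, by have := x.isLt; omega⟩ : Fin a) else x := by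
    intro a x hx i j hij
    rw [Fin.lt_def] at hij
    have := j.isLt
    dsimp only
    split_ifs <;> simp only [Fin.lt_def] <;> omega
  refine ⟨_, _, hmono p hpq.1, hmono q hpq.2, fun i => ?_⟩
  by_cases hi : (i : ℕ) < k - 1
  · simp [hi, setOne, lShape]
  · simp [hi, setOne]

lemma weight_lShape (hm : k ≤ m) (hn : k ≤ n) :
    weight (lShape k m n) = (k - 1) * (m + n - (k - 1)) := by
  have hzeros : (univ.filter fun p : Fin m × Fin n => ¬ lShape k m n p.1 p.2 = true) =
      (univ.filter fun i : Fin m => k - 1 ≤ (i : ℕ)) ×ˢ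
        (univ.filter fun j : Fin n => k - 1 ≤ (j : ℕ)) := by
    ext p
    simp [lShape]
  have hcard : ∀ a, k - 1 ≤ a →
      #(univ.filter fun i : Fin a => k - 1 ≤ (i : ℕ)) = a - (k - 1) := by
    intro a ha
    have := card_filter_add_card_filter_not (s := univ) fun i : Fin a => (i : ℕ) < k - 1
    simp only [not_lt, Fin.card_filter_val_lt, card_univ, Fintype.card_fin] at this
    omega
  have htotal := card_filter_add_card_filter_not (s := (univ : Finset (Fin m × Fin n)))
    fun p => lShape k m n p.1 p.2 = true
  rw [hzeros, card_product, hcard m (by omega), hcard n (by omega), card_univ,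
    Fintype.card_prod, Fintype.card_fin, Fintype.card_fin] at htotal
  rw [weight]
  obtain ⟨m', rfl⟩ := Nat.exists_eq_add_of_le (show k - 1 ≤ m by omega)
  obtain ⟨n', rfl⟩ := Nat.exists_eq_add_of_le (show k - 1 ≤ n by omega)
  have hexp : (k - 1 + m') * (k - 1 + n') = (k - 1) * (k - 1 + m' + n') + m' * n' := by ring
  simp only [Nat.add_sub_cancel_left] at htotal
  rw [show k - 1 + m' + (k - 1 + n') - (k - 1) = k - 1 + m' + n' by omega]
  omega

end

/-- `sat(I_k,m,n) = ex(I_k,m,n) = (k-1)(m + n - (k-1))` for `m, n ≥ k`. -/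
theorem sat_ex_Ik (k m n : ℕ) (hm : k ≤ m) (hn : k ≤ n) :
    satF (Imat k) m n = (k - 1) * (m + n - (k - 1)) ∧
    exF (Imat k) m n = (k - 1) * (m + n - (k - 1)) := by
  rcases Nat.eq_zero_or_pos k with rfl | hk
  · have hcont : ∀ M : Fin m → Fin n → Bool, Contains (Imat 0) M := fun _ =>
      ⟨Fin.elim0, Fin.elim0, fun a => a.elim0, fun a => a.elim0, fun i => i.elim0⟩
    simp [satF, exF, Saturating, Avoids, hcont]
  have hL := saturating_lShape (m := m) (n := n) hk
  rw [← weight_lShape hm hn]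
  refine ⟨IsLeast.csInf_eq ⟨⟨_, hL, rfl⟩, ?_⟩, IsGreatest.csSup_eq ⟨⟨_, hL.1, rfl⟩, ?_⟩⟩
  · rintro _ ⟨M, hM, rfl⟩
    exact weight_le_weight_of_avoids_of_saturating hL.1 hM
  · rintro _ ⟨M, hM, rfl⟩
    exact weight_le_weight_of_avoids_of_saturating hM hL
end

section
/- Let P be a k×l 0-1 pattern satisfying: (1) the first and last row of P each contain a 1 entry that is the only 1 entry in its column, (2) the first and last column of P each contain a 1 entry that is the only 1 entry in its row, and (3) P contains a 1 entry that is the only 1 entry in both its row and its column. Then for n > max(2k−2, 2l−2), the n×n matrix consisting of four (k−1)×(l−1) all-ones blocks in the four corners and 0 elsewhere is semisaturating for P; hence ssat(P,n,n) ≤ (2k−2)(2l−2) = O(1). -/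
/-!
Every zero of the corner-block matrix lies in a middle row or a middle column. Choose a
`1` entry `(i₀, j₀)` of `P` that is alone in its row if the zero's row is not a middle row,
alone in its column if the zero's column is not a middle column, and alone in both if the
zero lies in the middle. Embed the rows of `P` before `i₀` into the top rows of the matrix,
those after `i₀` into the bottom rows, and `i₀` onto the zero's row; likewise for columns.
Every other `1` of `P` then lands in a corner block, so flipping the zero creates a new
occurrence of `P`.
-/

def InBorder (a n i : ℕ) : Prop := i < a ∨ n - a ≤ i

instance (a n i : ℕ) : Decidable (InBorder a n i) := inferInstanceAs (Decidable (_ ∨ _))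

def cornerBlocks (a b m n : ℕ) (i : Fin m) (j : Fin n) : Bool :=
  decide (InBorder a m i ∧ InBorder b n j)

lemma cornerBlocks_eq_true_iff {a b m n : ℕ} {i : Fin m} {j : Fin n} :
    cornerBlocks a b m n i j = true ↔ InBorder a m i ∧ InBorder b n j :=
  decide_eq_true_iff

lemma card_filter_inBorder_le (a n : ℕ) :
    (Finset.univ.filter fun i : Fin n => InBorder a n i).card ≤ 2 * a := by
  calc (Finset.univ.filter fun i : Fin n => InBorder a n i).card
      = ((Finset.univ.filter fun i : Fin n => InBorder a n i).image Fin.val).card :=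
        (Finset.card_image_of_injective _ Fin.val_injective).symm
    _ ≤ (Finset.range a ∪ Finset.Ico (n - a) n).card := by
        refine Finset.card_le_card fun x hx => ?_
        obtain ⟨i, hi, rfl⟩ := Finset.mem_image.mp hx
        have := i.isLt
        rw [Finset.mem_filter_univ, InBorder] at hi
        simp only [Finset.mem_union, Finset.mem_range, Finset.mem_Ico]
        omega
    _ ≤ a + (n - (n - a)) := by
        simpa using Finset.card_union_le (Finset.range a) (Finset.Ico (n - a) n)
    _ ≤ 2 * a := by omega

lemma weight_cornerBlocks_le (a b m n : ℕ) :
    weight (cornerBlocks a b m n) ≤ (2 * a) * (2 * b) := by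
  calc weight (cornerBlocks a b m n)
      ≤ ((Finset.univ.filter fun i : Fin m => InBorder a m i) ×ˢ
          (Finset.univ.filter fun j : Fin n => InBorder b n j)).card := by
        refine Finset.card_le_card fun x hx => ?_
        simp only [Finset.mem_filter, Finset.mem_univ, true_and,
          cornerBlocks_eq_true_iff] at hx
        simpa using hx
    _ ≤ (2 * a) * (2 * b) := by
        rw [Finset.card_product]
        exact Nat.mul_le_mul (card_filter_inBorder_le a m) (card_filter_inBorder_le b n)

/-- The embedding is the identity before `i₀` and the shift by `n - k` after it. -/
lemma exists_strictMono_apply_eq_inBorder {k n : ℕ} (i₀ : Fin k)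
    (v : Fin n) (hv₀ : (i₀ : ℕ) ≤ v) (hv₁ : (v : ℕ) + k ≤ n + i₀) :
    ∃ r : Fin k → Fin n, StrictMono r ∧ r i₀ = v ∧ ∀ i, i ≠ i₀ → InBorder (k - 1) n (r i) := by
  have hv := v.isLt
  let r : Fin k → Fin n := fun i =>
    ⟨if (i : ℕ) < i₀ then i else if (i : ℕ) = i₀ then v else n - k + i, by
      have := i.isLt; split_ifs <;> omega⟩
  refine ⟨r, fun i i' h => ?_, Fin.ext (by simp [r]), fun i hi => ?_⟩
  · have := i'.isLt
    rw [Fin.lt_def] at h ⊢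
    simp only [r]
    split_ifs <;> omega
  · have := i.isLt
    have hi' : (i : ℕ) ≠ i₀ := Fin.val_ne_of_ne hi
    simp only [InBorder, r]
    split_ifs <;> omega

lemma exists_new_occ_cornerBlocks {k l m n : ℕ} (P : Fin k → Fin l → Bool)
    {p : Fin m} {q : Fin n}
    (hpq : cornerBlocks (k - 1) (l - 1) m n p q = false)
    {i₀ : Fin k} {j₀ : Fin l} (hP : P i₀ j₀ = true)
    (hp₀ : (i₀ : ℕ) ≤ p) (hp₁ : (p : ℕ) + k ≤ m + i₀)
    (hq₀ : (j₀ : ℕ) ≤ q) (hq₁ : (q : ℕ) + l ≤ n + j₀)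
    (hrow : InBorder (k - 1) m p ∨ ∀ j, P i₀ j = true → j = j₀)
    (hcol : InBorder (l - 1) n q ∨ ∀ i, P i j₀ = true → i = i₀) :
    ∃ r c, IsOcc P (setOne (cornerBlocks (k - 1) (l - 1) m n) p q) r c ∧
      ¬ IsOcc P (cornerBlocks (k - 1) (l - 1) m n) r c := by
  obtain ⟨r, hr, hri₀, hr_border⟩ := exists_strictMono_apply_eq_inBorder i₀ p hp₀ hp₁
  obtain ⟨c, hc, hcj₀, hc_border⟩ := exists_strictMono_apply_eq_inBorder j₀ q hq₀ hq₁
  refine ⟨r, c, ⟨hr, hc, fun i j hij => ?_⟩, fun ⟨_, _, hM⟩ => ?_⟩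
  · by_cases hanchor : i = i₀ ∧ j = j₀
    · obtain ⟨rfl, rfl⟩ := hanchor
      simp [setOne, hri₀, hcj₀]
    have hi : InBorder (k - 1) m (r i) := by
      by_cases h : i = i₀
      · subst h
        rw [hri₀]
        exact hrow.resolve_right fun h' => hanchor ⟨rfl, h' j hij⟩
      · exact hr_border i h
    have hj : InBorder (l - 1) n (c j) := by
      by_cases h : j = j₀
      · subst h
        rw [hcj₀]
        exact hcol.resolve_right fun h' => hanchor ⟨h' i hij, rfl⟩
      · exact hc_border j h
    have : cornerBlocks (k - 1) (l - 1) m n (r i) (c j) = true :=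
      cornerBlocks_eq_true_iff.mpr ⟨hi, hj⟩
    simp [setOne, this]
  · simpa [hri₀, hcj₀, hpq] using hM i₀ j₀ hP

lemma ssatF_le_weight {k l m n : ℕ} {P : Fin k → Fin l → Bool} {M : Fin m → Fin n → Bool}
    (hM : Semisaturating P M) : ssatF P m n ≤ weight M :=
  Nat.sInf_le ⟨M, hM, rfl⟩

def SoleInRow {k l : ℕ} (P : Fin k → Fin l → Bool) (i : Fin k) (j : Fin l) : Prop :=
  P i j = true ∧ ∀ j', P i j' = true → j' = j

def SoleInCol {k l : ℕ} (P : Fin k → Fin l → Bool) (i : Fin k) (j : Fin l) : Prop :=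
  P i j = true ∧ ∀ i', P i' j = true → i' = i

theorem cornerBlocks_semisaturating {k l m n : ℕ} (hk : 0 < k) (hl : 0 < l)
    (hm : 2 * k - 2 < m) (hn : 2 * l - 2 < n) (P : Fin k → Fin l → Bool)
    (hfirstRow : ∃ j, SoleInCol P ⟨0, hk⟩ j) (hlastRow : ∃ j, SoleInCol P ⟨k - 1, by omega⟩ j)
    (hfirstCol : ∃ i, SoleInRow P i ⟨0, hl⟩) (hlastCol : ∃ i, SoleInRow P i ⟨l - 1, by omega⟩)
    (hsole : ∃ i j, P i j = true ∧ (∀ i', P i' j = true → i' = i) ∧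
      (∀ j', P i j' = true → j' = j)) :
    Semisaturating P (cornerBlocks (k - 1) (l - 1) m n) := by
  intro p q hpq
  have hp := p.isLt
  have hq := q.isLt
  have hzero : ¬ (InBorder (k - 1) m p ∧ InBorder (l - 1) n q) := by
    rw [← cornerBlocks_eq_true_iff, hpq]
    exact Bool.false_ne_true
  by_cases hpb : InBorder (k - 1) m p
  · have hqb : ¬ InBorder (l - 1) n q := fun h => hzero ⟨hpb, h⟩
    rw [InBorder] at hqb
    rcases hpb with htop | hbottom
    · obtain ⟨j₀, hP, hcol⟩ := hfirstRow
      exact exists_new_occ_cornerBlocks P hpq hP (by simp) (by simp; omega)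
        (by omega) (by omega) (.inl (.inl htop)) (.inr hcol)
    · obtain ⟨j₀, hP, hcol⟩ := hlastRow
      exact exists_new_occ_cornerBlocks P hpq hP (by simp; omega) (by simp; omega)
        (by omega) (by omega) (.inl (.inr hbottom)) (.inr hcol)
  · rw [InBorder] at hpb
    by_cases hqb : InBorder (l - 1) n q
    · rcases hqb with hleft | hright
      · obtain ⟨i₀, hP, hrow⟩ := hfirstCol
        exact exists_new_occ_cornerBlocks P hpq hP (by omega) (by omega) (by simp)
          (by simp; omega) (.inr hrow) (.inl (.inl hleft))
      · obtain ⟨i₀, hP, hrow⟩ := hlastCol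
        exact exists_new_occ_cornerBlocks P hpq hP (by omega) (by omega)
          (by simp; omega) (by simp; omega) (.inr hrow) (.inl (.inr hright))
    · rw [InBorder] at hqb
      obtain ⟨i₀, j₀, hP, hcol, hrow⟩ := hsole
      exact exists_new_occ_cornerBlocks P hpq hP (by omega) (by omega) (by omega)
        (by omega) (.inr hrow) (.inr hcol)

/-- if `P` satisfies the three special-entry properties, then for
`n > max(2k-2, 2l-2)` the matrix with four `(k-1) × (l-1)` all-ones corner blocks is
semisaturating for `P`; hence `ssat(P,n,n) ≤ (2k-2)(2l-2)`. -/
theorem ssat_bounded_of_properties {k l : ℕ} (hk : 0 < k) (hl : 0 < l)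
    (P : Fin k → Fin l → Bool)
    (h1 : ∃ j : Fin l, P ⟨0, hk⟩ j = true ∧ ∀ i : Fin k, P i j = true → i = ⟨0, hk⟩)
    (h1' : ∃ j : Fin l, P ⟨k - 1, by omega⟩ j = true ∧
      ∀ i : Fin k, P i j = true → i = ⟨k - 1, by omega⟩)
    (h2 : ∃ i : Fin k, P i ⟨0, hl⟩ = true ∧ ∀ j : Fin l, P i j = true → j = ⟨0, hl⟩)
    (h2' : ∃ i : Fin k, P i ⟨l - 1, by omega⟩ = true ∧
      ∀ j : Fin l, P i j = true → j = ⟨l - 1, by omega⟩)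
    (h3 : ∃ (i : Fin k) (j : Fin l), P i j = true ∧
      (∀ i' : Fin k, P i' j = true → i' = i) ∧ (∀ j' : Fin l, P i j' = true → j' = j)) :
    ∀ n : ℕ, max (2 * k - 2) (2 * l - 2) < n →
      Semisaturating P (fun (i : Fin n) (j : Fin n) =>
        decide (((i : ℕ) < k - 1 ∨ n - (k - 1) ≤ (i : ℕ)) ∧
                ((j : ℕ) < l - 1 ∨ n - (l - 1) ≤ (j : ℕ)))) ∧
      ssatF P n n ≤ (2 * k - 2) * (2 * l - 2) := by
  intro n hn
  obtain ⟨hkn, hln⟩ := max_lt_iff.mp hn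
  have hsemi : Semisaturating P (cornerBlocks (k - 1) (l - 1) n n) :=
    cornerBlocks_semisaturating hk hl hkn hln P h1 h1' h2 h2' h3
  refine ⟨hsemi, (ssatF_le_weight hsemi).trans ?_⟩
  calc weight (cornerBlocks (k - 1) (l - 1) n n) ≤ (2 * (k - 1)) * (2 * (l - 1)) :=
        weight_cornerBlocks_le _ _ _ _
    _ = (2 * k - 2) * (2 * l - 2) := by rw [Nat.mul_sub_one, Nat.mul_sub_one]
end

section
/- Let P be a 0-1 pattern such that no 1 entry in the first row of P is the unique 1 entry in its column. Then every n×n matrix semisaturating for P has a 1 entry in every column; consequently ssat(P,n,n) ≥ n. -/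
/-- if no `1` entry in the first row of `P` is the unique `1` entry in
its column, then every `n × n` matrix semisaturating for `P` has a `1` entry in every
column; hence `ssat(P,n,n) ≥ n`. -/
theorem ssat_linear_of_first_row {k l : ℕ} (hk : 0 < k) (P : Fin k → Fin l → Bool)
    (h : ∀ j : Fin l, P ⟨0, hk⟩ j = true → ∃ i : Fin k, i ≠ ⟨0, hk⟩ ∧ P i j = true) :
    (∀ n : ℕ, ∀ M : Fin n → Fin n → Bool, Semisaturating P M →
      ∀ j : Fin n, ∃ i : Fin n, M i j = true) ∧
    (∀ n : ℕ, n ≤ ssatF P n n) := by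
  have main : ∀ n : ℕ, ∀ M : Fin n → Fin n → Bool, Semisaturating P M →
      ∀ j : Fin n, ∃ i : Fin n, M i j = true := by
    intro n M hM q
    by_contra hcon
    push_neg at hcon
    have hzero : ∀ i, M i q = false := by
      intro i
      cases hMi : M i q
      · rfl
      · exact absurd hMi (hcon i)
    have hn : 0 < n := q.pos
    obtain ⟨r, c, ⟨hr, hc, hocc⟩, hnot⟩ := hM ⟨0, hn⟩ q (hzero ⟨0, hn⟩)
    by_cases huse : ∃ i j, P i j = true ∧ r i = ⟨0, hn⟩ ∧ c j = q
    · obtain ⟨i, j, hP, hri, hcj⟩ := huse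
      have hi0 : i = ⟨0, hk⟩ := by
        by_contra hi
        have hlt : (⟨0, hk⟩ : Fin k) < i := by
          rw [Fin.lt_def]
          simp only []
          rcases Nat.eq_zero_or_pos i.val with h0 | h0
          · exact absurd (Fin.ext h0) hi
          · exact h0
        have h2 := hr hlt
        rw [hri, Fin.lt_def] at h2
        exact Nat.not_lt_zero _ h2
      obtain ⟨i', hi'ne, hPi'⟩ := h j (hi0 ▸ hP)
      have hval := hocc i' j hPi'
      have hne : r i' ≠ ⟨0, hn⟩ := by
        intro heq
        apply hi'ne
        rw [hi0] at hri
        exact hr.injective (heq.trans hri.symm) ▸ rfl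
      rw [setOne, if_neg (by tauto), hcj] at hval
      rw [hzero (r i')] at hval
      exact Bool.false_ne_true hval
    · push_neg at huse
      apply hnot
      refine ⟨hr, hc, ?_⟩
      intro i j hP
      have hval := hocc i j hP
      rw [setOne] at hval
      by_cases hij : r i = ⟨0, hn⟩ ∧ c j = q
      · exact absurd hij.2 (huse i j hP hij.1)
      · rwa [if_neg hij] at hval
  refine ⟨main, ?_⟩
  intro n
  have hne : Set.Nonempty {w | ∃ M : Fin n → Fin n → Bool, Semisaturating P M ∧ weight M = w} :=
    ⟨weight (fun _ _ => true), fun _ _ => true, fun p q hpq => by simp at hpq, rfl⟩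
  apply le_csInf hne
  rintro w ⟨M, hM, rfl⟩
  choose f hf using main n M hM
  have hcard : (Finset.univ : Finset (Fin n)).card ≤
      (Finset.univ.filter (fun p : Fin n × Fin n => M p.1 p.2 = true)).card := by
    apply Finset.card_le_card_of_injOn (fun j => (f j, j))
    · intro j _
      simp [hf]
    · intro a _ b _ hab
      exact congrArg Prod.snd hab
  simpa [weight] using hcard
end

section
/- Let P be a 0-1 pattern with no 1 entry that is simultaneously the unique 1 entry in its row and the unique 1 entry in its column. Then no n×n matrix semisaturating for P can have both an all-zero row and an all-zero column; consequently ssat(P,n,n) ≥ n. -/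
lemma exists_zero_row {n : ℕ} (M : Fin n → Fin n → Bool) (hw : weight M < n) :
    ∃ i, ∀ j, M i j = false := by
  by_contra hc
  push_neg at hc
  have hch : ∀ i : Fin n, ∃ j, M i j = true := by
    intro i
    obtain ⟨j, hj⟩ := hc i
    exact ⟨j, by revert hj; cases M i j <;> simp⟩
  choose f hf using hch
  have : (Finset.univ : Finset (Fin n)).card ≤ weight M := by
    apply Finset.card_le_card_of_injOn (fun i => (i, f i))
    · intro i _
      simp [hf i]
    · intro a _ b _ hab
      exact congrArg Prod.fst hab
  simp at this
  omega

lemma exists_zero_col {n : ℕ} (M : Fin n → Fin n → Bool) (hw : weight M < n) :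
    ∃ j, ∀ i, M i j = false := by
  by_contra hc
  push_neg at hc
  have hch : ∀ j : Fin n, ∃ i, M i j = true := by
    intro j
    obtain ⟨i, hi⟩ := hc j
    exact ⟨i, by revert hi; cases M i j <;> simp⟩
  choose f hf using hch
  have : (Finset.univ : Finset (Fin n)).card ≤ weight M := by
    apply Finset.card_le_card_of_injOn (fun j => (f j, j))
    · intro j _
      simp [hf j]
    · intro a _ b _ hab
      exact congrArg Prod.snd hab
  simp at this
  omega

/-- if no `1` entry of `P` is simultaneously the unique `1` entry in its
row and in its column, then no `n × n` semisaturating matrix for `P` has both an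
all-zero row and an all-zero column; hence `ssat(P,n,n) ≥ n`. -/
theorem ssat_linear_of_no_isolated {k l : ℕ} (P : Fin k → Fin l → Bool)
    (h : ∀ (i : Fin k) (j : Fin l), P i j = true →
      (∃ i' : Fin k, i' ≠ i ∧ P i' j = true) ∨ (∃ j' : Fin l, j' ≠ j ∧ P i j' = true)) :
    (∀ n : ℕ, ∀ M : Fin n → Fin n → Bool, Semisaturating P M →
      ¬((∃ i : Fin n, ∀ j : Fin n, M i j = false) ∧
        (∃ j : Fin n, ∀ i : Fin n, M i j = false))) ∧
    (∀ n : ℕ, n ≤ ssatF P n n) := by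
  have main : ∀ n : ℕ, ∀ M : Fin n → Fin n → Bool, Semisaturating P M →
      ¬((∃ i : Fin n, ∀ j : Fin n, M i j = false) ∧
        (∃ j : Fin n, ∀ i : Fin n, M i j = false)) := by
    rintro n M hM ⟨⟨i0, hi0⟩, ⟨j0, hj0⟩⟩
    obtain ⟨r, c, ⟨hr, hc, hocc⟩, hnot⟩ := hM i0 j0 (hi0 j0)
    have hfail : ∃ i j, P i j = true ∧ ¬ M (r i) (c j) = true := by
      by_contra hcon
      push_neg at hcon
      exact hnot ⟨hr, hc, hcon⟩
    obtain ⟨i, j, hPij, hMf⟩ := hfail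
    have hset := hocc i j hPij
    have heq : r i = i0 ∧ c j = j0 := by
      by_contra hne
      rw [setOne, if_neg hne] at hset
      exact hMf hset
    rcases h i j hPij with ⟨i', hne, hP'⟩ | ⟨j', hne, hP'⟩
    · have hset' := hocc i' j hP'
      have hri : ¬ (r i' = i0 ∧ c j = j0) := by
        rintro ⟨h1, -⟩
        exact hne (hr.injective (h1.trans heq.1.symm))
      rw [setOne, if_neg hri] at hset'
      rw [heq.2, hj0] at hset'
      simp at hset'
    · have hset' := hocc i j' hP'
      have hcj : ¬ (r i = i0 ∧ c j' = j0) := by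
        rintro ⟨-, h2⟩
        exact hne (hc.injective (h2.trans heq.2.symm))
      rw [setOne, if_neg hcj] at hset'
      rw [heq.1, hi0] at hset'
      simp at hset'
  refine ⟨main, fun n => ?_⟩
  have hne : {w | ∃ M : Fin n → Fin n → Bool, Semisaturating P M ∧ weight M = w}.Nonempty := by
    refine ⟨weight (fun _ _ => true), fun _ _ => true, ?_, rfl⟩
    intro p q hpq
    simp at hpq
  have hmem := Nat.sInf_mem hne
  obtain ⟨M, hsemi, hw⟩ := hmem
  rw [ssatF]
  by_contra hlt
  push_neg at hlt
  rw [← hw] at hlt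
  exact main n M hsemi ⟨exists_zero_row M hlt, exists_zero_col M hlt⟩
end
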